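/- arXiv:math/0304368 — 5 statements merged into one kernel-verified Lean document; each statement's English description precedes it below -/
import Mathlib

section
/- For a permutation σ of {1,...,N}, let ℓ_N(σ) denote the length of the longest increasing subsequence of σ; then ℓ_N(σ) equals the length of the first row of the Young tableau associated to σ under the Robinson–Schensted correspondence. -/
/-- Schensted row insertion: insert `x` into a row, returning the new row and the
bumped entry (if any).  The entry bumped is the leftmost one that is `≥ x`;
if every entry is `< x`, then `x` is appended at the end of the row. -/
def rowInsert (x : ℕ) : List ℕ → List ℕ × Option ℕ
  | [] => ([x], none)
  | y :: ys =>
    if x ≤ y then (x :: ys, some y)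
    else
      let p := rowInsert x ys
      (y :: p.1, p.2)

open List in
lemma rowInsert_spec (x : ℕ) (r : List ℕ) :
    ∃ k, ∃ _ : k ≤ r.length,
      (rowInsert x r).1 = r.take k ++ x :: r.drop (k + 1) ∧
      (∀ j (_ : j < k) (hj : j < r.length), r[j] < x) ∧
      (∀ (h : k < r.length), x ≤ r[k]) := by
  induction r with
  | nil => exact ⟨0, le_refl _, by simp [rowInsert], by omega, by simp⟩
  | cons y ys ih =>
    by_cases hxy : x ≤ y
    · exact ⟨0, Nat.zero_le _, by simp [rowInsert, hxy], by omega, fun h => hxy⟩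
    · obtain ⟨k, hk, h1, h2, h3⟩ := ih
      refine ⟨k + 1, by simpa using hk, ?_, ?_, ?_⟩
      · simp only [rowInsert, if_neg hxy, take_succ_cons, drop_succ_cons, cons_append]
        rw [h1]
      · intro j hjk hj
        cases j with
        | zero => simpa using (by omega : y < x)
        | succ j => exact h2 j (by omega) (by simpa using hj)
      · intro h
        simpa using h3 (by simpa using h)

/-- The invariant for patience-sorting / first row of Schensted insertion. -/
def RSInv (w r : List ℕ) : Prop :=
  r.Pairwise (· ≤ ·) ∧
  (∀ (k : ℕ) (h : k < r.length), ∃ s : List ℕ, s.Sublist w ∧ s.Chain' (· < ·) ∧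
      s.length = k + 1 ∧ s.getLast? = some r[k]) ∧
  (∀ s : List ℕ, s.Sublist w → s.Chain' (· < ·) → ∀ y, s.getLast? = some y →
      ∃ h : s.length - 1 < r.length, r[s.length - 1] ≤ y)

open List in
lemma rsInv_nil : RSInv [] [] := by
  refine ⟨Pairwise.nil, by simp, ?_⟩
  intro s hs _ y hy
  rw [sublist_nil.mp hs] at hy
  simp at hy

open List in
lemma rsInv_step (x : ℕ) {w r : List ℕ} (h : RSInv w r) :
    RSInv (w ++ [x]) (rowInsert x r).1 := by
  obtain ⟨hsort, hex, hub⟩ := h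
  obtain ⟨k, hk, heq, hlt, hge⟩ := rowInsert_spec x r
  have hsort' := (pairwise_iff_getElem).mp hsort
  set r' := (rowInsert x r).1 with hr'
  have hlen : r'.length = max (k + 1) r.length := by
    rw [heq]; simp; omega
  -- getElem? facts
  have hq1 : ∀ j, j < k → r'[j]? = r[j]? := by
    intro j hj
    rw [heq, getElem?_append_left (by simp; omega), getElem?_take_of_lt hj]
  have hq2 : r'[k]? = some x := by
    rw [heq, getElem?_append_right (by simp)]
    simp [Nat.min_eq_left hk]
  have hq3 : ∀ j, k < j → r'[j]? = r[j]? := by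
    intro j hj
    rw [heq, getElem?_append_right (by simp; omega)]
    have h1 : j - (r.take k).length = (j - k - 1) + 1 := by simp; omega
    rw [h1, getElem?_cons_succ, getElem?_drop]
    congr 1
    omega
  -- getElem facts
  have hB : ∀ (h1 : k < r'.length), r'[k] = x := by
    intro h1
    have := hq2
    rwa [getElem?_eq_getElem h1, Option.some_inj] at this
  have hA : ∀ j (h1 : j < r'.length), j ≠ k →
      ∃ h2 : j < r.length, r'[j] = r[j] := by
    intro j h1 hjk
    have hq : r'[j]? = r[j]? := by
      rcases Nat.lt_or_ge j k with h | h
      · exact hq1 j h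
      · exact hq3 j (by omega)
    rw [getElem?_eq_getElem h1] at hq
    have h2 : j < r.length := by
      by_contra hc
      rw [getElem?_eq_none (by omega)] at hq
      simp at hq
    rw [getElem?_eq_getElem h2, Option.some_inj] at hq
    exact ⟨h2, hq⟩
  refine ⟨?_, ?_, ?_⟩
  · -- sorted
    rw [pairwise_iff_getElem]
    intro i j hi hj hij
    rcases eq_or_ne i k with rfl | hik
    · obtain ⟨hj2, hj3⟩ := hA j hj (by omega)
      rw [hB hi, hj3]
      exact le_trans (hge (by omega)) (hsort' i j (by omega) hj2 hij)
    · obtain ⟨hi2, hi3⟩ := hA i hi hik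
      rcases eq_or_ne j k with rfl | hjk
      · rw [hB hj, hi3]
        exact le_of_lt (hlt i hij hi2)
      · obtain ⟨hj2, hj3⟩ := hA j hj hjk
        rw [hi3, hj3]
        exact hsort' i j hi2 hj2 hij
  · -- existence part
    intro j hj
    rcases eq_or_ne j k with rfl | hjk
    · have hx := hB hj
      match j, hj, hx with
      | 0, hj, hx =>
        exact ⟨[x], (nil_sublist w).append (Sublist.refl [x]), isChain_singleton x, rfl,
          by simp [hx]⟩
      | (m+1), hj, hx =>
        have hm : m < r.length := by omega
        obtain ⟨s, hs1, hs2, hs3, hs4⟩ := hex m hm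
        refine ⟨s ++ [x], hs1.append (Sublist.refl [x]), ?_, by simp [hs3],
          by simp [getLast?_concat, hx]⟩
        rw [Chain', isChain_append]
        refine ⟨hs2, isChain_singleton x, ?_⟩
        intro a ha b hb
        simp only [head?_cons, Option.mem_def, Option.some_inj] at hb
        subst hb
        rw [hs4] at ha
        simp only [Option.mem_def, Option.some_inj] at ha
        subst ha
        exact hlt m (by omega) hm
    · obtain ⟨hj2, hj3⟩ := hA j hj hjk
      obtain ⟨s, hs1, hs2, hs3, hs4⟩ := hex j hj2
      exact ⟨s, hs1.trans (sublist_append_left w [x]), hs2, hs3, by rw [hs4, hj3]⟩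
  · -- upper bound part
    have hxle : ∀ j (hj : j < r.length), k ≤ j → x ≤ r[j] := by
      intro j hj hkj
      rcases eq_or_lt_of_le hkj with rfl | hlt2
      · exact hge hj
      · exact le_trans (hge (by omega)) (hsort' k j (by omega) hj hlt2)
    intro s hs hchain y hy
    rw [sublist_append_iff] at hs
    obtain ⟨s₁, s₂, rfl, hs1, hs2⟩ := hs
    have hs2' : s₂ = [] ∨ s₂ = [x] := sublist_singleton.mp hs2
    rcases hs2' with rfl | rfl
    · simp only [append_nil] at hchain hy ⊢
      obtain ⟨h1, h2⟩ := hub s₁ hs1 hchain y hy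
      refine ⟨by omega, ?_⟩
      rcases eq_or_ne (s₁.length - 1) k with hek | hne
      · subst hek
        rw [hB (by omega)]
        exact le_trans (hge (by omega)) h2
      · obtain ⟨h3, h4⟩ := hA _ (by omega) hne
        rw [h4]
        exact h2
    · have hyx : y = x := by
        rw [getLast?_concat] at hy
        exact (Option.some_inj.mp hy).symm
      rw [hyx]
      rw [Chain', isChain_append] at hchain
      obtain ⟨hc1, -, hc3⟩ := hchain
      simp only [length_append, length_singleton, Nat.add_sub_cancel]
      rcases eq_or_ne s₁ [] with rfl | hne
      · refine ⟨by simp; omega, ?_⟩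
        simp only [length_nil]
        rcases Nat.eq_zero_or_pos k with rfl | hk0
        · rw [hB (by omega)]
        · obtain ⟨h3, h4⟩ := hA 0 (by omega) (by omega)
          rw [h4]
          exact le_of_lt (hlt 0 hk0 h3)
      · obtain ⟨z, hz⟩ := Option.isSome_iff_exists.mp (getLast?_isSome.mpr hne)
        have hzx : z < x := hc3 z hz x rfl
        obtain ⟨h1, h2⟩ := hub s₁ hs1 hc1 z hz
        have hmk : s₁.length - 1 < k := by
          by_contra hc
          push_neg at hc
          have hkr : k < r.length := by omega
          have := hxle (s₁.length - 1) h1 hc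
          omega
        have hs1pos : 0 < s₁.length := length_pos_iff.mpr hne
        refine ⟨by omega, ?_⟩
        rcases eq_or_ne s₁.length k with hek | hne2
        · subst hek
          rw [hB (by omega)]
        · obtain ⟨h3, h4⟩ := hA s₁.length (by omega) hne2
          rw [h4]
          exact le_of_lt (hlt s₁.length (by omega) h3)

open List in
lemma rsInv_foldl (w : List ℕ) :
    RSInv w (w.foldl (fun r x => (rowInsert x r).1) []) := by
  induction w using List.reverseRecOn with
  | nil => exact rsInv_nil
  | append_singleton w x ih =>
    rw [foldl_append, foldl_cons, foldl_nil]
    exact rsInv_step x ih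

/-- Schensted insertion of `x` into a tableau, given as its list of rows. -/
def tableauInsert (x : ℕ) : List (List ℕ) → List (List ℕ)
  | [] => [[x]]
  | r :: rs =>
    match rowInsert x r with
    | (r', none) => r' :: rs
    | (r', some y) => r' :: tableauInsert y rs

/-- The insertion (P-) tableau of the Robinson–Schensted correspondence applied to
the word `w`. -/
def rsTableau (w : List ℕ) : List (List ℕ) :=
  w.foldl (fun t x => tableauInsert x t) []

lemma headD_tableauInsert (x : ℕ) (t : List (List ℕ)) :
    (tableauInsert x t).headD [] = (rowInsert x (t.headD [])).1 := by
  cases t with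
  | nil => simp [tableauInsert, rowInsert]
  | cons r rs =>
    simp only [tableauInsert, List.headD_cons]
    rcases h : rowInsert x r with ⟨r', o⟩
    cases o <;> simp [h]

lemma headD_foldl (w : List ℕ) (t : List (List ℕ)) :
    (w.foldl (fun t x => tableauInsert x t) t).headD []
      = w.foldl (fun r x => (rowInsert x r).1) (t.headD []) := by
  induction w generalizing t with
  | nil => rfl
  | cons a w ih =>
    rw [List.foldl_cons, List.foldl_cons, ih, headD_tableauInsert]

/-- The length of the longest increasing subsequence of a permutation `σ` of `Fin N`. -/
noncomputable def lisLen {N : ℕ} (σ : Equiv.Perm (Fin N)) : ℕ :=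
  sSup {m : ℕ | ∃ f : Fin m → Fin N, StrictMono f ∧ StrictMono (σ ∘ f)}

open List

/-- The length of the longest increasing subsequence of `σ` equals the length of the
first row of the Young tableau associated to `σ` by the Robinson–Schensted
correspondence. -/
theorem lisLen_eq_rs_firstRow (N : ℕ) (σ : Equiv.Perm (Fin N)) :
    lisLen σ = ((rsTableau (List.ofFn fun i => (σ i : ℕ))).headD []).length := by
  set w : List ℕ := List.ofFn fun i => (σ i : ℕ) with hw
  have hW : w.length = N := by simp [hw]
  have hwget : ∀ (jv : ℕ) (hj : jv < w.length), w[jv] = (σ ⟨jv, by omega⟩ : ℕ) := by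
    intro jv hj
    simp [hw]
  rw [rsTableau, headD_foldl]
  simp only [List.headD_nil]
  obtain ⟨hsort, hex, hub⟩ := rsInv_foldl w
  set r : List ℕ := w.foldl (fun r x => (rowInsert x r).1) [] with hrdef
  have hset : ∀ m : ℕ, (∃ f : Fin m → Fin N, StrictMono f ∧ StrictMono (σ ∘ f)) ↔
      (∃ s : List ℕ, s <+ w ∧ s.Chain' (· < ·) ∧ s.length = m) := by
    intro m
    constructor
    · rintro ⟨f, hf, hsf⟩
      have hls : (List.ofFn (fun i : Fin m => ((σ (f i) : ℕ)))).length = m := by simp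
      refine ⟨List.ofFn (fun i : Fin m => ((σ (f i) : ℕ))), ?_, ?_, by simp⟩
      · rw [List.sublist_iff_exists_fin_orderEmbedding_get_eq]
        refine ⟨OrderEmbedding.ofStrictMono
            (fun i => Fin.cast hW.symm (f (Fin.cast hls i))) ?_, ?_⟩
        · intro i j hij
          simp only [Fin.lt_def, Fin.coe_cast]
          exact hf hij
        · intro i
          rw [List.get_eq_getElem, List.get_eq_getElem, List.getElem_ofFn, hwget]
          rfl
      · rw [List.Chain', List.isChain_iff_getElem]
        intro i hi
        simp only [List.getElem_ofFn]
        have him : i < m - 1 := by simp at hi; omega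
        have hitm : i < m := by omega
        have hlt2 : (⟨i, hitm⟩ : Fin m) < ⟨i + 1, by omega⟩ := by
          simp [Fin.lt_def]
        exact hsf hlt2
    · rintro ⟨s, hs, hchain, rfl⟩
      obtain ⟨g, hg⟩ := List.sublist_iff_exists_fin_orderEmbedding_get_eq.mp hs
      have h1 : ∀ i : Fin s.length, (σ (Fin.cast hW (g i)) : ℕ) = s.get i := by
        intro i
        rw [hg, List.get_eq_getElem, hwget]
        rfl
      have hpair := List.pairwise_iff_get.mp (List.isChain_iff_pairwise.mp hchain)
      refine ⟨fun i => Fin.cast hW (g i), ?_, ?_⟩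
      · intro i j hij
        simp only [Fin.lt_def, Fin.coe_cast]
        exact g.strictMono hij
      · intro i j hij
        have h3 : s.get i < s.get j := hpair i j hij
        rw [← h1 i, ← h1 j] at h3
        exact Fin.lt_def.mpr h3
  rw [lisLen]
  set S := {m : ℕ | ∃ f : Fin m → Fin N, StrictMono f ∧ StrictMono (σ ∘ f)} with hS
  have h0 : 0 ∈ S := ⟨Fin.elim0, fun i => i.elim0, fun i => i.elim0⟩
  have hubS : ∀ m ∈ S, m ≤ r.length := by
    intro m hm
    rw [hS, Set.mem_setOf_eq, hset] at hm
    obtain ⟨s, hs, hc, rfl⟩ := hm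
    rcases eq_or_ne s [] with rfl | hne
    · simp
    · obtain ⟨y, hy⟩ := Option.isSome_iff_exists.mp (List.getLast?_isSome.mpr hne)
      obtain ⟨h1, -⟩ := hub s hs hc y hy
      have : s.length ≠ 0 := fun h => hne (List.length_eq_zero_iff.mp h)
      omega
  have hmem : r.length ∈ S := by
    rw [hS, Set.mem_setOf_eq, hset]
    rcases Nat.eq_zero_or_pos r.length with h | h
    · exact ⟨[], List.nil_sublist w, List.isChain_nil, h.symm⟩
    · obtain ⟨s, hs1, hs2, hs3, -⟩ := hex (r.length - 1) (by omega)
      exact ⟨s, hs1, hs2, by omega⟩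
  exact le_antisymm (csSup_le ⟨0, h0⟩ hubS) (le_csSup ⟨r.length, hubS⟩ hmem)
end

section
/- (Heine identity / Andréief identity) For functions φ_1,...,φ_n and ψ_1,...,ψ_n on a measure space (Ω, μ) such that all products φ_i ψ_j are integrable, (1/n!) ∫_{Ω^n} det(φ_i(x_j))_{1≤i,j≤n} · det(ψ_i(x_j))_{1≤i,j≤n} dμ(x_1)...dμ(x_n) = det( ∫_Ω φ_i(x) ψ_j(x) dμ(x) )_{1≤i,j≤n}. -/
/-!
Expanding both determinants by the Leibniz formula writes the integrand as a signed sum, over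
pairs of permutations `(σ, τ)`, of products `∏ j, φ (σ j) (x j) * ψ (τ j) (x j)`, each of which
splits under Fubini into `∏ j, G (σ j) (τ j)` with `G i j = ∫ φ i * ψ j`. For fixed `σ` the sum
over `τ` is the determinant of `G` with its rows permuted by `σ`, i.e. `sign σ * det G`; the
extra factor `sign σ` cancels, so each of the `n!` choices of `σ` contributes `det G`.
-/

open MeasureTheory Equiv

namespace Matrix

variable {ι R : Type*} [Fintype ι] [DecidableEq ι] [CommRing R]

theorem sum_perm_sign_smul_prod_eq_sign_smul_det (σ : Perm ι) (A : Matrix ι ι R) :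
    ∑ τ : Perm ι, Perm.sign τ • ∏ j, A (σ j) (τ j) = Perm.sign σ • A.det := by
  rw [Units.smul_def, zsmul_eq_mul, ← det_permute, ← det_transpose, det_apply]
  rfl

theorem sum_perm_perm_sign_smul_prod_eq_factorial_smul_det (A : Matrix ι ι R) :
    ∑ σ : Perm ι, ∑ τ : Perm ι, (Perm.sign σ * Perm.sign τ) • ∏ j, A (σ j) (τ j) =
      (Fintype.card ι).factorial • A.det := by
  have hrow (σ : Perm ι) :
      ∑ τ : Perm ι, (Perm.sign σ * Perm.sign τ) • ∏ j, A (σ j) (τ j) = A.det := by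
    simp_rw [mul_smul]
    rw [← Finset.smul_sum, sum_perm_sign_smul_prod_eq_sign_smul_det, smul_smul,
      Int.units_mul_self, one_smul]
  simp only [hrow, Finset.sum_const, Finset.card_univ, Fintype.card_perm]

theorem det_mul_det_eq_sum_perm_perm (A B : Matrix ι ι R) :
    A.det * B.det =
      ∑ σ : Perm ι, ∑ τ : Perm ι, (Perm.sign σ * Perm.sign τ) • ∏ j, A (σ j) j * B (τ j) j := by
  simp only [det_apply, Finset.sum_mul_sum, smul_mul_smul, Finset.prod_mul_distrib, mul_smul]

end Matrix

theorem integral_det_mul_det {ι Ω 𝕜 : Type*} [Fintype ι] [DecidableEq ι] [RCLike 𝕜]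
    [MeasurableSpace Ω] (μ : Measure Ω) [SigmaFinite μ] (φ ψ : ι → Ω → 𝕜)
    (hint : ∀ i j, Integrable (fun x => φ i x * ψ j x) μ) :
    ∫ x : ι → Ω, (Matrix.of fun i j => φ i (x j)).det * (Matrix.of fun i j => ψ i (x j)).det
        ∂(Measure.pi fun _ => μ) =
      ((Fintype.card ι).factorial : 𝕜) * (Matrix.of fun i j => ∫ x, φ i x * ψ j x ∂μ).det := by
  set term : Perm ι → Perm ι → (ι → Ω) → 𝕜 := fun σ τ x =>
    (Perm.sign σ * Perm.sign τ) • ∏ j, φ (σ j) (x j) * ψ (τ j) (x j)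
  have hterm (σ τ : Perm ι) : Integrable (term σ τ) (Measure.pi fun _ => μ) :=
    (Integrable.fintype_prod (f := fun j x => φ (σ j) x * ψ (τ j) x) fun j => hint _ _).smul _
  have hfubini (σ τ : Perm ι) :
      ∫ x, term σ τ x ∂(Measure.pi fun _ => μ) =
        (Perm.sign σ * Perm.sign τ) • ∏ j, ∫ x, φ (σ j) x * ψ (τ j) x ∂μ := by
    simp only [term, Units.smul_def, zsmul_eq_mul, integral_const_mul]
    rw [integral_fintype_prod_eq_prod fun j x => φ (σ j) x * ψ (τ j) x]
  calc ∫ x, (Matrix.of fun i j => φ i (x j)).det * (Matrix.of fun i j => ψ i (x j)).det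
          ∂(Measure.pi fun _ => μ)
      = ∫ x, ∑ σ, ∑ τ, term σ τ x ∂(Measure.pi fun _ => μ) := by
        simp only [Matrix.det_mul_det_eq_sum_perm_perm, Matrix.of_apply, term]
    _ = ∑ σ, ∑ τ, (Perm.sign σ * Perm.sign τ) • ∏ j, ∫ x, φ (σ j) x * ψ (τ j) x ∂μ := by
        rw [integral_finsetSum _ fun σ _ => integrable_finsetSum _ fun τ _ => hterm σ τ]
        simp only [integral_finsetSum _ fun τ _ => hterm _ τ, hfubini]
    _ = _ := by
        rw [← nsmul_eq_mul]
        exact Matrix.sum_perm_perm_sign_smul_prod_eq_factorial_smul_det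
          (Matrix.of fun i j => ∫ x, φ i x * ψ j x ∂μ)

theorem heine_identity_general {Ω : Type*} [MeasurableSpace Ω] (μ : Measure Ω) [SigmaFinite μ]
    (n : ℕ) (φ ψ : Fin n → Ω → ℝ)
    (hint : ∀ i j, Integrable (fun x => φ i x * ψ j x) μ) :
    (1 / (Nat.factorial n : ℝ)) *
        (∫ x : Fin n → Ω,
          (Matrix.det fun i j => φ i (x j)) * (Matrix.det fun i j => ψ i (x j))
          ∂Measure.pi fun _ => μ) =
      Matrix.det fun i j => ∫ x, φ i x * ψ j x ∂μ := by
  have h := integral_det_mul_det μ φ ψ hint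
  rw [Fintype.card_fin] at h
  rw [one_div, inv_mul_eq_iff_eq_mul₀ (by positivity)]
  exact h

/-- The Heine (Andréief) identity: for functions `φ_1, …, φ_n` and `ψ_1, …, ψ_n`
with all products `φ_i ψ_j` integrable,
`(1/n!) ∫ det(φ_i(x_j)) det(ψ_i(x_j)) dμ^n(x) = det(∫ φ_i ψ_j dμ)`. -/
theorem heine_identity {Ω : Type*} [MeasurableSpace Ω] (μ : Measure Ω) [SigmaFinite μ]
    (n : ℕ) (φ ψ : Fin n → Ω → ℝ)
    (hφ : ∀ i, Measurable (φ i)) (hψ : ∀ i, Measurable (ψ i))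
    (hint : ∀ i j, Integrable (fun x => φ i x * ψ j x) μ) :
    (1 / (Nat.factorial n : ℝ)) *
        (∫ x : Fin n → Ω,
          (Matrix.det fun i j => φ i (x j)) * (Matrix.det fun i j => ψ i (x j))
          ∂Measure.pi fun _ => μ) =
      Matrix.det fun i j => ∫ x, φ i x * ψ j x ∂μ :=
  heine_identity_general μ n φ ψ hint
end

section
/- The triple product identity Π_{i=1}^k Π_{j=1}^k Π_{ℓ=1}^n (i + j + ℓ − 1)/(i + j + ℓ − 2) = Π_{j=0}^{n−1} j!(j+2k)! / ((j+k)!)² holds for all positive integers n, k, and consequently lim_{n→∞} n^{−k²} Π_{j=0}^{n−1} j!(j+2k)!/((j+k)!)² = Π_{j=0}^{k−1} j!/(j+k)!. -/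
/-!
For fixed `i, j` the product over `ℓ` telescopes to `(i + j - 1 + n) / (i + j - 1)`; call the
product of these `k²` quotients `boxProduct k n`. The ratio `boxProduct k (n + 1) / boxProduct k n`
telescopes again, now in `j`, to `∏ i, (n + k + i) / (n + i) = n! (n + 2k)! / ((n + k)!)²`, which
gives the identity by induction on `n`. Dividing each of the `k²` quotients by `n`, the `(i, j)`
factor tends to `1 / (i + j - 1)`, and `∏_{i,j} 1 / (i + j - 1) = ∏_{m < k} m! / (m + k)!`.
-/

open Filter Finset Nat

theorem Finset.prod_Ico_div_of_ne_zero {K : Type*} [Field K] {f : ℕ → K} {m n : ℕ} (hmn : m ≤ n)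
    (hf : ∀ i ∈ Icc m n, f i ≠ 0) : ∏ i ∈ Ico m n, f (i + 1) / f i = f n / f m := by
  induction n, hmn using Nat.le_induction with
  | base => simp [div_self (hf m (by simp))]
  | succ n hmn ih =>
    rw [prod_Ico_succ_top hmn, ih fun i hi => hf i (Icc_subset_Icc_right n.le_succ hi)]
    have := hf n (mem_Icc.2 ⟨hmn, n.le_succ⟩)
    field_simp

theorem Finset.prod_Icc_div_of_ne_zero {K : Type*} [Field K] {f : ℕ → K} {m n : ℕ}
    (hmn : m ≤ n + 1) (hf : ∀ i ∈ Icc m (n + 1), f i ≠ 0) :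
    ∏ i ∈ Icc m n, f (i + 1) / f i = f (n + 1) / f m := by
  rw [← Ico_add_one_right_eq_Icc, prod_Ico_div_of_ne_zero hmn hf]

theorem Nat.factorial_mul_prod_Icc_add (m k : ℕ) : m ! * ∏ i ∈ Icc 1 k, (m + i) = (m + k)! := by
  rw [← Ico_add_one_right_eq_Icc, prod_Ico_eq_prod_range, Nat.add_sub_cancel]
  simpa [add_assoc, ascFactorial_eq_prod_range] using factorial_mul_ascFactorial m k

theorem tendsto_add_div_div_natCast (c : ℝ) :
    Tendsto (fun n : ℕ => (c + n) / c / n) atTop (nhds c⁻¹) := by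
  have h : Tendsto (fun n : ℕ => (c / n + 1) * c⁻¹) atTop (nhds ((0 + 1) * c⁻¹)) :=
    ((tendsto_const_div_atTop_nhds_zero_nat c).add_const 1).mul_const _
  rw [zero_add, one_mul] at h
  refine h.congr' ?_
  filter_upwards [eventually_ne_atTop 0] with n hn
  field_simp

theorem prod_Icc_natCast_add (m k : ℕ) : ∏ i ∈ Icc 1 k, ((m : ℝ) + i) = (m + k)! / m ! := by
  rw [eq_div_iff (by positivity), mul_comm]
  exact_mod_cast factorial_mul_prod_Icc_add m k

theorem one_le_natCast_of_mem_Icc {i k : ℕ} (hi : i ∈ Icc 1 k) : (1 : ℝ) ≤ i := by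
  exact_mod_cast (mem_Icc.1 hi).1

theorem prod_Icc_add_div_add_sub_one {a : ℝ} (ha : 0 < a) (n : ℕ) :
    ∏ l ∈ Icc 1 n, (a + l) / (a + l - 1) = (a + n) / a := by
  have key := prod_Icc_div_of_ne_zero (f := fun l : ℕ => a + l - 1) (m := 1) (n := n) (by omega)
    fun l hl => by linarith [one_le_natCast_of_mem_Icc hl]
  push_cast at key
  convert key using 2 <;> ring

noncomputable def boxProduct (k n : ℕ) : ℝ :=
  ∏ i ∈ Icc 1 k, ∏ j ∈ Icc 1 k, ((i : ℝ) + j - 1 + n) / ((i : ℝ) + j - 1)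

theorem prod_prod_prod_eq_boxProduct (k n : ℕ) :
    ∏ i ∈ Icc 1 k, ∏ j ∈ Icc 1 k, ∏ l ∈ Icc 1 n,
      (((i : ℝ) + j + l - 1) / ((i : ℝ) + j + l - 2)) = boxProduct k n := by
  refine prod_congr rfl fun i hi => prod_congr rfl fun j hj => ?_
  have hi := one_le_natCast_of_mem_Icc hi
  have hj := one_le_natCast_of_mem_Icc hj
  rw [← prod_Icc_add_div_add_sub_one (a := (i : ℝ) + j - 1) (by linarith) n]
  exact prod_congr rfl fun l _ => by ring

theorem prod_prod_add_div_add_sub_one (k n : ℕ) :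
    ∏ i ∈ Icc 1 k, ∏ j ∈ Icc 1 k, ((i : ℝ) + n + j) / ((i : ℝ) + n + j - 1) =
      n ! * (n + 2 * k)! / (n + k)! ^ 2 := by
  have inner : ∀ i ∈ Icc 1 k, ∏ j ∈ Icc 1 k, ((i : ℝ) + n + j) / ((i : ℝ) + n + j - 1) =
      (((n + k : ℕ) : ℝ) + i) / ((n : ℝ) + i) := fun i hi => by
    have hi := one_le_natCast_of_mem_Icc hi
    rw [prod_Icc_add_div_add_sub_one (by positivity)]
    push_cast
    ring
  rw [prod_congr rfl inner, prod_div_distrib, prod_Icc_natCast_add, prod_Icc_natCast_add,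
    add_assoc, ← two_mul]
  field_simp

theorem boxProduct_succ (k n : ℕ) :
    boxProduct k (n + 1) = boxProduct k n * (n ! * (n + 2 * k)! / (n + k)! ^ 2) := by
  rw [boxProduct, boxProduct, ← prod_prod_add_div_add_sub_one, ← prod_mul_distrib]
  refine prod_congr rfl fun i hi => ?_
  rw [← prod_mul_distrib]
  refine prod_congr rfl fun j hj => ?_
  have hi := one_le_natCast_of_mem_Icc hi
  have hj := one_le_natCast_of_mem_Icc hj
  have hn : (0 : ℝ) ≤ n := n.cast_nonneg
  have : (i : ℝ) + j - 1 ≠ 0 := by linarith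
  have : (i : ℝ) + n + j - 1 ≠ 0 := by linarith
  push_cast
  field_simp
  ring

theorem boxProduct_eq_prod_range (k n : ℕ) :
    boxProduct k n = ∏ j ∈ range n, (j ! : ℝ) * (j + 2 * k)! / (j + k)! ^ 2 := by
  induction n with
  | zero =>
    refine prod_eq_one fun i hi => prod_eq_one fun j hj => ?_
    have hi := one_le_natCast_of_mem_Icc hi
    have hj := one_le_natCast_of_mem_Icc hj
    rw [Nat.cast_zero, add_zero, div_self (by linarith)]
  | succ n ih => rw [boxProduct_succ, ih, prod_range_succ]

theorem boxProduct_div_pow (k n : ℕ) :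
    boxProduct k n / (n : ℝ) ^ (k ^ 2) =
      ∏ i ∈ Icc 1 k, ∏ j ∈ Icc 1 k, ((i : ℝ) + j - 1 + n) / ((i : ℝ) + j - 1) / n := by
  simp only [boxProduct, prod_div_distrib, prod_const, Nat.card_Icc, Nat.add_sub_cancel, ← pow_mul,
    sq]

theorem tendsto_boxProduct_div_pow (k : ℕ) :
    Tendsto (fun n : ℕ => boxProduct k n / (n : ℝ) ^ (k ^ 2)) atTop
      (nhds (∏ i ∈ Icc 1 k, ∏ j ∈ Icc 1 k, ((i : ℝ) + j - 1)⁻¹)) := by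
  simp only [boxProduct_div_pow]
  exact tendsto_finsetProd _ fun i _ => tendsto_finsetProd _ fun j _ =>
    tendsto_add_div_div_natCast _

theorem prod_prod_inv_eq_prod_range (k : ℕ) :
    ∏ i ∈ Icc 1 k, ∏ j ∈ Icc 1 k, ((i : ℝ) + j - 1)⁻¹ = ∏ m ∈ range k, (m ! : ℝ) / (m + k)! := by
  have shift : ∀ m ∈ range k,
      (m ! : ℝ) / (m + k)! = ∏ j ∈ Icc 1 k, (((m + 1 : ℕ) : ℝ) + j - 1)⁻¹ := fun m _ => by
    rw [prod_inv_distrib, ← inv_div, ← prod_Icc_natCast_add]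
    push_cast
    ring_nf
  rw [prod_congr rfl shift, range_eq_Ico,
    prod_Ico_add' (fun i : ℕ => ∏ j ∈ Icc 1 k, ((i : ℝ) + j - 1)⁻¹), zero_add,
    Ico_add_one_right_eq_Icc]

theorem triple_product_identity_and_limit_general (k : ℕ) :
    (∀ n : ℕ, 1 ≤ n →
      (∏ i ∈ Finset.Icc 1 k, ∏ j ∈ Finset.Icc 1 k, ∏ l ∈ Finset.Icc 1 n,
          (((i : ℝ) + j + l - 1) / ((i : ℝ) + j + l - 2))) =
        ∏ j ∈ Finset.range n,
          (Nat.factorial j : ℝ) * Nat.factorial (j + 2 * k) /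
            ((Nat.factorial (j + k) : ℝ)) ^ 2) ∧
    Tendsto
      (fun n : ℕ =>
        (∏ j ∈ Finset.range n,
            (Nat.factorial j : ℝ) * Nat.factorial (j + 2 * k) /
              ((Nat.factorial (j + k) : ℝ)) ^ 2) / (n : ℝ) ^ (k ^ 2))
      atTop
      (nhds (∏ j ∈ Finset.range k,
        (Nat.factorial j : ℝ) / Nat.factorial (j + k))) := by
  refine ⟨fun n _ => by rw [prod_prod_prod_eq_boxProduct, boxProduct_eq_prod_range], ?_⟩
  simp only [← boxProduct_eq_prod_range, ← prod_prod_inv_eq_prod_range]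
  exact tendsto_boxProduct_div_pow k

/-- The triple product identity
`∏_{i=1}^k ∏_{j=1}^k ∏_{ℓ=1}^n (i+j+ℓ-1)/(i+j+ℓ-2) = ∏_{j=0}^{n-1} j!(j+2k)!/((j+k)!)²`
for all positive `n, k`, together with the limit
`lim_{n→∞} n^{-k²} ∏_{j=0}^{n-1} j!(j+2k)!/((j+k)!)² = ∏_{j=0}^{k-1} j!/(j+k)!`. -/
theorem triple_product_identity_and_limit (k : ℕ) (hk : 1 ≤ k) :
    (∀ n : ℕ, 1 ≤ n →
      (∏ i ∈ Finset.Icc 1 k, ∏ j ∈ Finset.Icc 1 k, ∏ l ∈ Finset.Icc 1 n,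
          (((i : ℝ) + j + l - 1) / ((i : ℝ) + j + l - 2))) =
        ∏ j ∈ Finset.range n,
          (Nat.factorial j : ℝ) * Nat.factorial (j + 2 * k) /
            ((Nat.factorial (j + k) : ℝ)) ^ 2) ∧
    Tendsto
      (fun n : ℕ =>
        (∏ j ∈ Finset.range n,
            (Nat.factorial j : ℝ) * Nat.factorial (j + 2 * k) /
              ((Nat.factorial (j + k) : ℝ)) ^ 2) / (n : ℝ) ^ (k ^ 2))
      atTop
      (nhds (∏ j ∈ Finset.range k,
        (Nat.factorial j : ℝ) / Nat.factorial (j + k))) :=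
  triple_product_identity_and_limit_general k
end

section
/- (Determinantal correlation functions of orthogonal polynomial ensembles) Let w ≥ 0 be a weight on a measure space (Ω, μ) with all moments finite, and let p_0, p_1, ... be the orthonormal polynomials for w dμ with leading coefficients κ_n > 0. Define K_N(x,y) = Σ_{k=0}^{N−1} p_k(x) p_k(y) (w(x)w(y))^{1/2} and u_N(x) = Z_N^{−1} Π_{i<j}(x_i − x_j)² Π_j w(x_j). Then for 1 ≤ m ≤ N, (N!/(N−m)!) ∫_{Ω^{N−m}} u_N(x) dμ(x_{m+1})...dμ(x_N) = det( K_N(x_i, x_j) )_{1≤i,j≤m}. -/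
/-
Put `φ_k = p_k √w`, so that `K_N(x, y) = ∑_{k<N} φ_k(x) φ_k(y)` with `(φ_k)` orthonormal in `L²(μ)`:
`K_N` is the kernel of a rank-`N` orthogonal projection, `∫ K(a,t) K(t,b) dμ(t) = K(a,b)` and
`∫ K(t,t) dμ(t) = N`. For any such kernel, integrating `det[K(z_i, z_j)]` over one of `n + 1`
variables gives `(N - n) det[K(z_i, z_j)]` on the remaining `n` (Gaudin's lemma): expand along the
new column and then along the new row; the reproducing property turns each cross term into minus
the Laplace expansion of the `n × n` determinant along a row. Integrating out `r` of `m + r`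
variables therefore multiplies by `r!`, and integrating out all `N` gives `N!`.
On the other hand `det[K_N(x_i, x_j)]_{i,j ≤ N} = (det Φ)²` with `Φ = (φ_k(x_i))`, and reducing the
`p_k` to monomials gives `det Φ = (∏ κ_k) · Vandermonde(x) · ∏ √w(x_i)`. Hence
`∏_{i<j} (x_i - x_j)² ∏ w(x_j) = (∏ κ_k)⁻² det[K_N(x_i, x_j)]`, which evaluates both `Z_N` and
the marginal.
-/

open MeasureTheory

/-- The Christoffel–Darboux kernel
`K_N(x,y) = ∑_{k<N} p_k(x) p_k(y) √(w(x) w(y))`. -/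
noncomputable def cdKernel (w : ℝ → ℝ) (p : ℕ → Polynomial ℝ) (N : ℕ) (x y : ℝ) : ℝ :=
  (∑ k ∈ Finset.range N, (p k).eval x * (p k).eval y) * Real.sqrt (w x * w y)

/-- The orthogonal polynomial ensemble density
`u_N(x) = Z⁻¹ ∏_{i<j} (x_i - x_j)² ∏_j w(x_j)`. -/
noncomputable def opeDensity (w : ℝ → ℝ) (Z : ℝ) (N : ℕ) (x : Fin N → ℝ) : ℝ :=
  Z⁻¹ * (∏ i : Fin N, ∏ j ∈ Finset.Ioi i, (x i - x j) ^ 2) * ∏ j, w (x j)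

open Finset Matrix

section KernelMatrix

variable {α ι ι' : Type*}

def kernelMatrix (K : α → α → ℝ) (z : ι → α) : Matrix ι ι ℝ :=
  Matrix.of fun i j => K (z i) (z j)

variable (K : α → α → ℝ)

lemma kernelMatrix_comp (z : ι → α) (e : ι' → ι) :
    kernelMatrix K (z ∘ e) = (kernelMatrix K z).submatrix e e :=
  rfl

lemma det_kernelMatrix_comp_equiv [Fintype ι] [DecidableEq ι] [Fintype ι'] [DecidableEq ι']
    (z : ι → α) (e : ι' ≃ ι) : (kernelMatrix K (z ∘ e)).det = (kernelMatrix K z).det := by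
  rw [kernelMatrix_comp, det_submatrix_equiv_self]

lemma det_kernelMatrix_cons {n : ℕ} (t : α) (x : Fin (n + 1) → α) :
    (kernelMatrix K (Fin.cons t x)).det =
      K t t * (kernelMatrix K x).det +
        ∑ k : Fin (n + 1), ∑ j : Fin (n + 1), (-1) ^ (k + 1 + j : ℕ) * (K (x k) t * K t (x j)) *
          ((kernelMatrix K x).submatrix k.succAbove j.succAbove).det := by
  rw [det_succ_column_zero, Fin.sum_univ_succ]
  congr 1
  · simp only [Fin.val_zero, pow_zero, one_mul]
    rfl
  · refine sum_congr rfl fun k _ => ?_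
    rw [det_succ_row_zero, mul_sum]
    refine sum_congr rfl fun j _ => ?_
    have hminor : ((kernelMatrix K (Fin.cons t x)).submatrix k.succ.succAbove Fin.succ).submatrix
        Fin.succ j.succAbove = (kernelMatrix K x).submatrix k.succAbove j.succAbove := by
      ext a b
      simp [kernelMatrix, Fin.succ_succAbove_succ]
    rw [hminor]
    simp only [submatrix_apply, kernelMatrix, of_apply, Fin.succ_succAbove_zero, Fin.cons_zero,
      Fin.cons_succ, Fin.val_succ, pow_add]
    ring

lemma abs_det_kernelMatrix_le [Fintype ι] [DecidableEq ι] {g : α → ℝ}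
    (hK : ∀ a b, |K a b| ≤ g a * g b) (z : ι → α) :
    |(kernelMatrix K z).det| ≤ (Fintype.card ι).factorial * ∏ i, g (z i) ^ 2 := by
  rw [det_apply']
  calc _ ≤ ∑ σ : Equiv.Perm ι, |(Equiv.Perm.sign σ : ℝ) * ∏ i, kernelMatrix K z (σ i) i| :=
        abs_sum_le_sum_abs _ _
    _ ≤ ∑ _σ : Equiv.Perm ι, ∏ i, g (z i) ^ 2 := sum_le_sum fun σ _ => ?_
    _ = _ := by simp [Fintype.card_perm]
  calc |(Equiv.Perm.sign σ : ℝ) * ∏ i, kernelMatrix K z (σ i) i|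
      = ∏ i, |K (z (σ i)) (z i)| := by
        rcases Int.units_eq_one_or (Equiv.Perm.sign σ) with h | h <;>
          simp [h, abs_prod, kernelMatrix]
    _ ≤ ∏ i, g (z (σ i)) * g (z i) :=
        prod_le_prod (fun _ _ => abs_nonneg _) fun i _ => hK _ _
    _ = ∏ i, g (z i) ^ 2 := by
        rw [prod_mul_distrib, Equiv.prod_comp σ (fun i => g (z i)), ← prod_mul_distrib]
        simp [sq]

lemma measurable_det_kernelMatrix [Fintype ι] [DecidableEq ι] [MeasurableSpace α]
    (hK : Measurable (Function.uncurry K)) :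
    Measurable fun z : ι → α => (kernelMatrix K z).det := by
  simp only [det_apply', kernelMatrix, of_apply]
  refine Finset.measurable_sum _ fun σ _ => (Finset.measurable_prod _ fun i _ => ?_).const_mul _
  exact hK.comp (f := fun z : ι → α => (z (σ i), z i)) (by fun_prop)

end KernelMatrix

lemma measurable_finAppend {α : Type*} [MeasurableSpace α] {n k : ℕ} (x : Fin n → α) :
    Measurable fun y : Fin k → α => Fin.append x y :=
  measurable_pi_lambda _ fun i => by
    refine Fin.addCases (motive := fun i => Measurable fun y : Fin k → α => Fin.append x y i)
      (fun i => ?_) (fun j => ?_) i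
    · simp only [Fin.append_left, measurable_const]
    · simp only [Fin.append_right, measurable_pi_apply]

structure IsProjectionKernel {α : Type*} [MeasurableSpace α] (μ : Measure α) (K : α → α → ℝ)
    (N : ℕ) : Prop where
  measurable : Measurable (Function.uncurry K)
  /-- A domination making every `det (kernelMatrix K z)` integrable on products of `μ`. -/
  exists_bound : ∃ g : α → ℝ, Integrable (fun t => g t ^ 2) μ ∧ ∀ a b, |K a b| ≤ g a * g b
  integral_mul : ∀ a b, ∫ t, K a t * K t b ∂μ = K a b
  integral_diag : ∫ t, K t t ∂μ = N

namespace IsProjectionKernel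

variable {α : Type*} [MeasurableSpace α] {μ : Measure α} {K : α → α → ℝ} {N : ℕ}
  (hK : IsProjectionKernel μ K N)
include hK

lemma integrable_diag : Integrable (fun t => K t t) μ := by
  obtain ⟨g, hg, hbound⟩ := hK.exists_bound
  refine hg.mono' (hK.measurable.comp (measurable_id.prodMk measurable_id)).aestronglyMeasurable
    (ae_of_all _ fun t => ?_)
  simpa [sq] using hbound t t

lemma integrable_mul (a b : α) : Integrable (fun t => K a t * K t b) μ := by
  obtain ⟨g, hg, hbound⟩ := hK.exists_bound
  refine (hg.const_mul (g a * g b)).mono'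
    (hK.measurable.of_uncurry_left.mul hK.measurable.of_uncurry_right).aestronglyMeasurable
    (ae_of_all _ fun t => ?_)
  calc ‖K a t * K t b‖ = |K a t| * |K t b| := by rw [Real.norm_eq_abs, abs_mul]
    _ ≤ (g a * g t) * (g t * g b) :=
        mul_le_mul (hbound a t) (hbound t b) (abs_nonneg _) ((abs_nonneg _).trans (hbound a t))
    _ = g a * g b * g t ^ 2 := by ring

lemma integrable_det_kernelMatrix_append [SigmaFinite μ] {n k : ℕ} (x : Fin n → α) :
    Integrable (fun y : Fin k → α => (kernelMatrix K (Fin.append x y)).det)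
      (Measure.pi fun _ => μ) := by
  obtain ⟨g, hg, hbound⟩ := hK.exists_bound
  refine ((Integrable.fintype_prod (f := fun _ t => g t ^ 2) fun _ => hg).const_mul
    ((n + k).factorial * ∏ i, g (x i) ^ 2)).mono'
    ((measurable_det_kernelMatrix K hK.measurable).comp
      (measurable_finAppend x)).aestronglyMeasurable (ae_of_all _ fun y => ?_)
  refine (abs_det_kernelMatrix_le K hbound _).trans_eq ?_
  rw [Fintype.card_fin, Fin.prod_univ_add]
  simp only [Fin.append_left, Fin.append_right]
  ring

lemma integral_det_kernelMatrix_cons {n : ℕ} (x : Fin n → α) :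
    ∫ t, (kernelMatrix K (Fin.cons t x)).det ∂μ = ((N : ℝ) - n) * (kernelMatrix K x).det := by
  cases n with
  | zero => simpa [det_unique, kernelMatrix] using hK.integral_diag
  | succ n =>
    have hrow : ∀ k : Fin (n + 1), ∑ j : Fin (n + 1), (-1) ^ (k + 1 + j : ℕ) * K (x k) (x j) *
        ((kernelMatrix K x).submatrix k.succAbove j.succAbove).det = -(kernelMatrix K x).det := by
      intro k
      rw [det_succ_row _ k, ← sum_neg_distrib]
      refine sum_congr rfl fun j _ => ?_
      simp only [kernelMatrix, of_apply, add_right_comm _ 1, pow_succ]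
      ring
    simp_rw [det_kernelMatrix_cons]
    rw [integral_add (hK.integrable_diag.mul_const _) (integrable_finsetSum _ fun k _ =>
      integrable_finsetSum _ fun j _ => ((hK.integrable_mul _ _).const_mul _).mul_const _),
      integral_mul_const, hK.integral_diag]
    rw [integral_finsetSum _ fun k _ =>
      integrable_finsetSum _ fun j _ => ((hK.integrable_mul _ _).const_mul _).mul_const _]
    simp_rw [integral_finsetSum _ fun j _ => ((hK.integrable_mul _ _).const_mul _).mul_const _,
      integral_mul_const, integral_const_mul, hK.integral_mul, hrow]
    simp only [sum_const, card_univ, Fintype.card_fin, nsmul_eq_mul, Nat.cast_add, Nat.cast_one]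
    ring

lemma integral_det_kernelMatrix_append [SigmaFinite μ] {n : ℕ} (x : Fin n → α) (k : ℕ) :
    ∫ y : Fin k → α, (kernelMatrix K (Fin.append x y)).det ∂(Measure.pi fun _ => μ) =
      (∏ s ∈ range k, ((N : ℝ) - n - s)) * (kernelMatrix K x).det := by
  induction k with
  | zero =>
    have hconst (y : Fin 0 → α) :
        (kernelMatrix K (Fin.append x y)).det = (kernelMatrix K x).det := by
      rw [Subsingleton.elim y Fin.elim0, Fin.append_elim0]
      exact det_kernelMatrix_comp_equiv K x (finCongr (Nat.add_zero n))
    simp [hconst, Measure.real, Measure.pi_empty_univ]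
  | succ k ih =>
    have hsplit :=
      (measurePreserving_piFinSuccAbove (fun _ : Fin (k + 1) => μ) (Fin.last k)).symm
    rw [← hsplit.integral_comp', integral_prod_symm]
    swap
    · exact (hsplit.integrable_comp_emb (MeasurableEquiv.measurableEmbedding _)).2
        (hK.integrable_det_kernelMatrix_append x)
    have hsnoc : ∀ y t, (kernelMatrix K (Fin.append x
        ((MeasurableEquiv.piFinSuccAbove (fun _ => α) (Fin.last k)).symm (t, y)))).det =
        (kernelMatrix K (Fin.cons t (Fin.append x y))).det := by
      intro y t
      rw [MeasurableEquiv.piFinSuccAbove_symm_apply, Fin.insertNthEquiv_last]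
      change (kernelMatrix K (Fin.append x (Fin.snoc y t))).det = _
      rw [Fin.append_snoc, Fin.snoc_eq_cons_rotate]
      exact det_kernelMatrix_comp_equiv K _ (finRotate _)
    simp_rw [hsnoc, hK.integral_det_kernelMatrix_cons, integral_const_mul, ih, prod_range_succ]
    push_cast
    ring

lemma integral_det_kernelMatrix [SigmaFinite μ] (k : ℕ) :
    ∫ z : Fin k → α, (kernelMatrix K z).det ∂(Measure.pi fun _ => μ) =
      ∏ s ∈ range k, ((N : ℝ) - s) := by
  have h := hK.integral_det_kernelMatrix_append (Fin.elim0 : Fin 0 → α) k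
  simp only [Fin.elim0_append, CharP.cast_eq_zero, sub_zero, det_fin_zero, mul_one] at h
  rw [← h]
  exact integral_congr_ae (ae_of_all _ fun z =>
    (det_kernelMatrix_comp_equiv K z (finCongr (Nat.zero_add k))).symm)

end IsProjectionKernel

section ProjKernel

variable {α ι : Type*}

def projKernel (φ : ℕ → α → ℝ) (N : ℕ) (a b : α) : ℝ :=
  ∑ k ∈ range N, φ k a * φ k b

lemma kernelMatrix_projKernel (φ : ℕ → α → ℝ) (N : ℕ) (z : ι → α) :
    kernelMatrix (projKernel φ N) z =
      (Matrix.of fun i (k : Fin N) => φ k (z i)) *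
        (Matrix.of fun i (k : Fin N) => φ k (z i))ᵀ := by
  ext i j
  simp only [kernelMatrix, projKernel, of_apply, mul_apply, transpose_apply,
    Fin.sum_univ_eq_sum_range (fun k => φ k (z i) * φ k (z j))]

lemma abs_projKernel_le (φ : ℕ → α → ℝ) (N : ℕ) (a b : α) :
    |projKernel φ N a b| ≤ √(∑ k ∈ range N, φ k a ^ 2) * √(∑ k ∈ range N, φ k b ^ 2) := by
  refine abs_le.2 ⟨neg_le.1 ?_, Real.sum_mul_le_sqrt_mul_sqrt _ _ _⟩
  simpa [projKernel, sum_neg_distrib] using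
    Real.sum_mul_le_sqrt_mul_sqrt (range N) (fun k => -φ k a) (fun k => φ k b)

lemma isProjectionKernel_projKernel [MeasurableSpace α] {μ : Measure α} {φ : ℕ → α → ℝ}
    (hmeas : ∀ k, Measurable (φ k)) (hint : ∀ j k, Integrable (fun t => φ j t * φ k t) μ)
    (horth : ∀ j k, ∫ t, φ j t * φ k t ∂μ = if j = k then 1 else 0) (N : ℕ) :
    IsProjectionKernel μ (projKernel φ N) N where
  measurable := by
    simp only [Function.uncurry_def, projKernel]
    exact Finset.measurable_sum _ fun k _ =>
      ((hmeas k).comp measurable_fst).mul ((hmeas k).comp measurable_snd)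
  exists_bound := by
    refine ⟨fun t => √(∑ k ∈ range N, φ k t ^ 2), ?_, abs_projKernel_le φ N⟩
    simp_rw [Real.sq_sqrt (sum_nonneg fun _ _ => sq_nonneg _), sq]
    exact integrable_finsetSum _ fun k _ => hint k k
  integral_mul a b := by
    have hexpand (t : α) : projKernel φ N a t * projKernel φ N t b =
        ∑ j ∈ range N, ∑ k ∈ range N, (φ j a * φ k b) * (φ j t * φ k t) := by
      simp only [projKernel, sum_mul_sum]
      exact sum_congr rfl fun j _ => sum_congr rfl fun k _ => by ring
    simp_rw [hexpand]
    rw [integral_finsetSum _ fun j _ => integrable_finsetSum _ fun k _ => (hint j k).const_mul _]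
    simp_rw [integral_finsetSum _ fun k _ => (hint _ k).const_mul _, integral_const_mul, horth]
    simp only [mul_ite, mul_one, mul_zero, sum_ite_eq, mem_range, projKernel]
    exact sum_congr rfl fun k hk => if_pos (mem_range.1 hk)
  integral_diag := by
    simp only [projKernel]
    rw [integral_finsetSum _ fun k _ => hint k k]
    simp [horth]

end ProjKernel

section OrthogonalPolynomials

open Polynomial

lemma integrable_eval_mul_of_integrable_pow_mul {μ : Measure ℝ} {w : ℝ → ℝ}
    (hmom : ∀ k : ℕ, Integrable (fun x => |x| ^ k * w x) μ) (q : ℝ[X]) :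
    Integrable (fun t => q.eval t * w t) μ := by
  have hw : AEStronglyMeasurable w μ := by simpa using (hmom 0).aestronglyMeasurable
  induction q using Polynomial.induction_on' with
  | add p q hp hq =>
    simp only [eval_add, add_mul]
    exact hp.add hq
  | monomial k c =>
    simp_rw [eval_monomial, mul_assoc]
    refine ((hmom k).mono ((continuous_pow k).aestronglyMeasurable.mul hw)
      (ae_of_all _ fun t => ?_)).const_mul c
    simp

lemma det_eval_eq_prod_leadingCoeff_mul_det_vandermonde {R : Type*} [CommRing R] {n : ℕ}
    (p : ℕ → R[X]) (hdeg : ∀ k, (p k).natDegree = k) (z : Fin n → R) :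
    (Matrix.of fun i (k : Fin n) => (p k).eval (z i)).det =
      (∏ k : Fin n, (p k).leadingCoeff) * (vandermonde z).det := by
  rw [eval_matrixOfPolynomials_eq_vandermonde_mul_matrixOfPolynomials z (fun k => p k)
      fun k => (hdeg k).le, det_mul, det_of_isUpperTriangular
      (matrixOfPolynomials_blockTriangular _ fun k => (hdeg k).le), mul_comm]
  simp [leadingCoeff, hdeg]

variable {μ : Measure ℝ} {w : ℝ → ℝ} {p : ℕ → ℝ[X]}

lemma cdKernel_eq_projKernel (hw : ∀ x, 0 ≤ w x) (N : ℕ) :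
    cdKernel w p N = projKernel (fun k t => (p k).eval t * √(w t)) N := by
  ext a b
  simp only [cdKernel, projKernel, Real.sqrt_mul (hw a), sum_mul]
  exact sum_congr rfl fun k _ => by ring

lemma isProjectionKernel_cdKernel (hw : ∀ x, 0 ≤ w x) (hwmeas : Measurable w)
    (hmom : ∀ k : ℕ, Integrable (fun x => |x| ^ k * w x) μ)
    (horth : ∀ j k, (∫ x, (p j).eval x * (p k).eval x * w x ∂μ) = if j = k then (1 : ℝ) else 0)
    (N : ℕ) : IsProjectionKernel μ (cdKernel w p N) N := by
  have hφ (j k : ℕ) (t : ℝ) : (p j).eval t * √(w t) * ((p k).eval t * √(w t)) =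
      (p j * p k).eval t * w t := by
    rw [eval_mul]
    linear_combination (p j).eval t * (p k).eval t * Real.mul_self_sqrt (hw t)
  rw [cdKernel_eq_projKernel hw]
  refine isProjectionKernel_projKernel (fun k => ?_) (fun j k => ?_) (fun j k => ?_) N
  · exact (p k).continuous.measurable.mul hwmeas.sqrt
  · simpa only [hφ] using integrable_eval_mul_of_integrable_pow_mul hmom (p j * p k)
  · simpa only [hφ, eval_mul] using horth j k

lemma det_kernelMatrix_cdKernel (hw : ∀ x, 0 ≤ w x) (hdeg : ∀ k, (p k).natDegree = k) {N : ℕ}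
    (z : Fin N → ℝ) :
    (kernelMatrix (cdKernel w p N) z).det = (∏ k : Fin N, (p k).leadingCoeff) ^ 2 *
      ((∏ i : Fin N, ∏ j ∈ Ioi i, (z i - z j) ^ 2) * ∏ j, w (z j)) := by
  have hV : (Matrix.of fun i (k : Fin N) => (p k).eval (z i) * √(w (z i))).det =
      (∏ i, √(w (z i))) * ((∏ k : Fin N, (p k).leadingCoeff) * (vandermonde z).det) := by
    simp_rw [mul_comm _ (√(w _))]
    rw [← det_eval_eq_prod_leadingCoeff_mul_det_vandermonde p hdeg]
    exact det_mul_column _ _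
  rw [cdKernel_eq_projKernel hw, kernelMatrix_projKernel, det_mul, det_transpose, hV,
    det_vandermonde]
  simp_rw [← sq, mul_pow, ← prod_pow, Real.sq_sqrt (hw _)]
  have hflip : ∏ i : Fin N, ∏ j ∈ Ioi i, (z j - z i) ^ 2 =
      ∏ i : Fin N, ∏ j ∈ Ioi i, (z i - z j) ^ 2 :=
    prod_congr rfl fun i _ => prod_congr rfl fun j _ => by ring
  rw [hflip]
  ring

end OrthogonalPolynomials

lemma prod_range_natCast_sub (k : ℕ) : ∏ s ∈ range k, ((k : ℝ) - s) = k.factorial := by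
  rw [← Nat.descFactorial_self, Nat.descFactorial_eq_prod_range, Nat.cast_prod]
  exact prod_congr rfl fun s hs => (Nat.cast_sub (mem_range.1 hs).le).symm

theorem ope_correlation_functions_general
    (μ : Measure ℝ) [SigmaFinite μ] (w : ℝ → ℝ) (hw : ∀ x, 0 ≤ w x)
    (hwmeas : Measurable w)
    (hmom : ∀ k : ℕ, Integrable (fun x => |x| ^ k * w x) μ)
    (p : ℕ → Polynomial ℝ)
    (hdeg : ∀ k, (p k).natDegree = k) (hlead : ∀ k, 0 < (p k).leadingCoeff)
    (horth : ∀ j k, (∫ x, (p j).eval x * (p k).eval x * w x ∂μ) =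
      if j = k then (1 : ℝ) else 0)
    (m r : ℕ) (Z : ℝ)
    (hZ : Z = ∫ x : Fin (m + r) → ℝ,
      (∏ i : Fin (m + r), ∏ j ∈ Finset.Ioi i, (x i - x j) ^ 2) * ∏ j, w (x j)
      ∂Measure.pi fun _ => μ)
    (x : Fin m → ℝ) :
    ((Nat.factorial (m + r) : ℝ) / Nat.factorial r) *
        (∫ y : Fin r → ℝ, opeDensity w Z (m + r) (Fin.append x y)
          ∂Measure.pi fun _ => μ) =
      Matrix.det fun i j : Fin m => cdKernel w p (m + r) (x i) (x j) := by
  set N := m + r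
  have hK := isProjectionKernel_cdKernel hw hwmeas hmom horth N
  set c := ∏ k : Fin N, (p k).leadingCoeff
  have hc : c ≠ 0 := (prod_pos fun (k : Fin N) _ => hlead k).ne'
  have hdensity (z : Fin N → ℝ) : (∏ i : Fin N, ∏ j ∈ Ioi i, (z i - z j) ^ 2) * ∏ j, w (z j) =
      (c ^ 2)⁻¹ * (kernelMatrix (cdKernel w p N) z).det := by
    rw [det_kernelMatrix_cdKernel hw hdeg, inv_mul_cancel_left₀ (pow_ne_zero 2 hc)]
  have hZ_factorial : Z = (c ^ 2)⁻¹ * N.factorial := by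
    simp_rw [hZ, hdensity]
    rw [integral_const_mul, hK.integral_det_kernelMatrix, prod_range_natCast_sub]
  have hmarginal :
      (∫ y : Fin r → ℝ, opeDensity w Z N (Fin.append x y) ∂Measure.pi fun _ => μ) =
      Z⁻¹ * (c ^ 2)⁻¹ * r.factorial * (kernelMatrix (cdKernel w p N) x).det := by
    simp_rw [opeDensity, mul_assoc, hdensity, ← mul_assoc]
    have hNm : (N : ℝ) - m = r := by simp [N]
    rw [integral_const_mul, hK.integral_det_kernelMatrix_append x r, hNm,
      prod_range_natCast_sub]
    ring
  rw [hmarginal, hZ_factorial]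
  field_simp
  rfl

/-- Determinantal correlation functions of orthogonal polynomial ensembles: with
`N = m + r`,
`(N!/(N-m)!) ∫ u_N(x₁,…,x_m,y₁,…,y_r) dμ(y₁)⋯dμ(y_r) = det(K_N(x_i,x_j))_{i,j≤m}`. -/
theorem ope_correlation_functions
    (μ : Measure ℝ) [SigmaFinite μ] (w : ℝ → ℝ) (hw : ∀ x, 0 ≤ w x)
    (hwmeas : Measurable w)
    (hmom : ∀ k : ℕ, Integrable (fun x => |x| ^ k * w x) μ)
    (p : ℕ → Polynomial ℝ)
    (hdeg : ∀ k, (p k).natDegree = k) (hlead : ∀ k, 0 < (p k).leadingCoeff)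
    (horth : ∀ j k, (∫ x, (p j).eval x * (p k).eval x * w x ∂μ) =
      if j = k then (1 : ℝ) else 0)
    (m r : ℕ) (hm : 1 ≤ m) (Z : ℝ) (hZ0 : Z ≠ 0)
    (hZ : Z = ∫ x : Fin (m + r) → ℝ,
      (∏ i : Fin (m + r), ∏ j ∈ Finset.Ioi i, (x i - x j) ^ 2) * ∏ j, w (x j)
      ∂Measure.pi fun _ => μ)
    (x : Fin m → ℝ) :
    ((Nat.factorial (m + r) : ℝ) / Nat.factorial r) *
        (∫ y : Fin r → ℝ, opeDensity w Z (m + r) (Fin.append x y)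
          ∂Measure.pi fun _ => μ) =
      Matrix.det fun i j : Fin m => cdKernel w p (m + r) (x i) (x j) :=
  ope_correlation_functions_general μ w hw hwmeas hmom p hdeg hlead horth m r Z hZ x
end

section
/- (Expectation of multiplicative statistics as a Fredholm determinant, finite case) With u_N and K_N as in the orthogonal polynomial ensemble, for any bounded function f : Ω → ℂ, E[ Π_{j=1}^N (1 + f(x_j)) ] = Σ_{k=0}^N (1/k!) ∫_{Ω^k} Π_{j=1}^k f(x_j) · det( K_N(x_i, x_j) )_{1≤i,j≤k} dμ(x_1)...dμ(x_k). -/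
open MeasureTheory

namespace OPEAux

open Finset Polynomial

/-- kernel as sum of products -/
lemma cdKernel_eq {w : ℝ → ℝ} (hw : ∀ x, 0 ≤ w x) (p : ℕ → Polynomial ℝ) (N : ℕ) (x y : ℝ) :
    cdKernel w p N x y = ∑ m : Fin N,
      ((p (m : ℕ)).eval x * Real.sqrt (w x)) * ((p (m : ℕ)).eval y * Real.sqrt (w y)) := by
  rw [Fin.sum_univ_eq_sum_range
    (fun m => ((p m).eval x * Real.sqrt (w x)) * ((p m).eval y * Real.sqrt (w y))) N]
  unfold cdKernel
  rw [Real.sqrt_mul (hw x), Finset.sum_mul]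
  exact Finset.sum_congr rfl fun m _ => by ring

lemma eval_abs_le (q : Polynomial ℝ) (x : ℝ) :
    |q.eval x| ≤ ∑ m ∈ Finset.range (q.natDegree + 1), |q.coeff m| * |x| ^ m := by
  rw [Polynomial.eval_eq_sum_range]
  refine (Finset.abs_sum_le_sum_abs _ _).trans ?_
  refine Finset.sum_le_sum fun m _ => ?_
  rw [abs_mul, abs_pow]

lemma integrable_g_poly {μ : Measure ℝ} {w : ℝ → ℝ} (hw : ∀ x, 0 ≤ w x)
    (hwmeas : Measurable w) (hmom : ∀ k : ℕ, Integrable (fun x => |x| ^ k * w x) μ)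
    {g : ℝ → ℂ} (hg : Measurable g) {Cg : ℝ} (hCg : ∀ x, ‖g x‖ ≤ Cg)
    (q : Polynomial ℝ) :
    Integrable (fun x => g x * ((q.eval x * w x : ℝ) : ℂ)) μ := by
  have hmeas : AEStronglyMeasurable (fun x => g x * ((q.eval x * w x : ℝ) : ℂ)) μ := by
    apply Measurable.aestronglyMeasurable
    exact hg.mul (Complex.measurable_ofReal.comp (q.continuous.measurable.mul hwmeas))
  refine Integrable.mono'
    (g := fun x => Cg * ∑ m ∈ Finset.range (q.natDegree + 1), |q.coeff m| * (|x| ^ m * w x))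
    ?_ hmeas (Filter.Eventually.of_forall fun x => ?_)
  · exact (integrable_finset_sum _ fun m _ => (hmom m).const_mul _).const_mul _
  · have h1 : ‖g x * ((q.eval x * w x : ℝ) : ℂ)‖ = ‖g x‖ * (|q.eval x| * w x) := by
      rw [norm_mul, Complex.norm_real, Real.norm_eq_abs, abs_mul, abs_of_nonneg (hw x)]
    rw [h1]
    have h2 : |q.eval x| * w x ≤
        ∑ m ∈ Finset.range (q.natDegree + 1), |q.coeff m| * (|x| ^ m * w x) := by
      calc |q.eval x| * w x
          ≤ (∑ m ∈ Finset.range (q.natDegree + 1), |q.coeff m| * |x| ^ m) * w x :=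
            mul_le_mul_of_nonneg_right (eval_abs_le q x) (hw x)
        _ = _ := by rw [Finset.sum_mul]; exact Finset.sum_congr rfl fun m _ => by ring
    have hCg0 : 0 ≤ Cg := le_trans (norm_nonneg _) (hCg x)
    exact mul_le_mul (hCg x) h2 (mul_nonneg (abs_nonneg _) (hw x)) hCg0

lemma integrable_MM {μ : Measure ℝ} {w : ℝ → ℝ} (hw : ∀ x, 0 ≤ w x)
    (hwmeas : Measurable w) (hmom : ∀ k : ℕ, Integrable (fun x => |x| ^ k * w x) μ)
    (p : ℕ → Polynomial ℝ)
    {g : ℝ → ℂ} (hg : Measurable g) {Cg : ℝ} (hCg : ∀ x, ‖g x‖ ≤ Cg) (a b : ℕ) :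
    Integrable (fun x => g x * (((p a).eval x * (p b).eval x * w x : ℝ) : ℂ)) μ := by
  simpa [Polynomial.eval_mul] using integrable_g_poly hw hwmeas hmom hg hCg (p a * p b)

lemma integrable_pi_prod {μ : Measure ℝ} [SigmaFinite μ] {k : ℕ} (h : Fin k → ℝ → ℂ)
    (hh : ∀ i, Integrable (h i) μ) :
    Integrable (fun y : Fin k → ℝ => ∏ i, h i (y i)) (Measure.pi fun _ => μ) := by
  letI : MeasureSpace ℝ := ⟨μ⟩
  haveI : SigmaFinite (volume : Measure ℝ) := ‹SigmaFinite μ›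
  exact Integrable.fintype_prod hh

lemma integral_pi_prod {μ : Measure ℝ} [SigmaFinite μ] {k : ℕ} (h : Fin k → ℝ → ℂ) :
    (∫ y : Fin k → ℝ, ∏ i, h i (y i) ∂(Measure.pi fun _ => μ)) = ∏ i, ∫ x, h i x ∂μ := by
  letI : MeasureSpace ℝ := ⟨μ⟩
  haveI : SigmaFinite (volume : Measure ℝ) := ‹SigmaFinite μ›
  exact MeasureTheory.integral_fintype_prod_eq_prod h

lemma det_cdKernel_expand {w : ℝ → ℝ} (hw : ∀ x, 0 ≤ w x) (p : ℕ → Polynomial ℝ)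
    (N k : ℕ) (y : Fin k → ℝ) :
    Matrix.det (fun i j : Fin k => cdKernel w p N (y i) (y j)) =
      ∑ τ : Equiv.Perm (Fin k), (((Equiv.Perm.sign τ : ℤ) : ℝ)) *
        ∑ φ : Fin k → Fin N,
          ∏ i, ((p (φ (τ⁻¹ i) : ℕ)).eval (y i) * (p (φ i : ℕ)).eval (y i) * w (y i)) := by
  change Matrix.det (Matrix.of fun i j : Fin k => cdKernel w p N (y i) (y j)) = _
  rw [Matrix.det_apply']
  refine Finset.sum_congr rfl fun τ _ => ?_
  congr 1
  calc ∏ i, cdKernel w p N (y (τ i)) (y i)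
      = ∏ i, ∑ m : Fin N, ((p (m : ℕ)).eval (y (τ i)) * Real.sqrt (w (y (τ i)))) *
          ((p (m : ℕ)).eval (y i) * Real.sqrt (w (y i))) :=
        Finset.prod_congr rfl fun i _ => cdKernel_eq hw p N (y (τ i)) (y i)
    _ = ∑ φ : Fin k → Fin N, ∏ i,
          ((p (φ i : ℕ)).eval (y (τ i)) * Real.sqrt (w (y (τ i)))) *
          ((p (φ i : ℕ)).eval (y i) * Real.sqrt (w (y i))) := Fintype.prod_sum _
    _ = ∑ φ : Fin k → Fin N, ∏ i,
          ((p (φ (τ⁻¹ i) : ℕ)).eval (y i) * (p (φ i : ℕ)).eval (y i) * w (y i)) := by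
        refine Finset.sum_congr rfl fun φ _ => ?_
        rw [Finset.prod_mul_distrib]
        have h1 : (∏ i, (p (φ i : ℕ)).eval (y (τ i)) * Real.sqrt (w (y (τ i))))
            = ∏ i, (p (φ (τ⁻¹ i) : ℕ)).eval (y i) * Real.sqrt (w (y i)) := by
          rw [← Equiv.prod_comp τ
            (fun i => (p (φ (τ⁻¹ i) : ℕ)).eval (y i) * Real.sqrt (w (y i)))]
          simp
        rw [h1, ← Finset.prod_mul_distrib]
        refine Finset.prod_congr rfl fun i _ => ?_
        have hs : Real.sqrt (w (y i)) * Real.sqrt (w (y i)) = w (y i) :=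
          Real.mul_self_sqrt (hw (y i))
        calc ((p (φ (τ⁻¹ i) : ℕ)).eval (y i) * Real.sqrt (w (y i))) *
              ((p (φ i : ℕ)).eval (y i) * Real.sqrt (w (y i)))
            = (p (φ (τ⁻¹ i) : ℕ)).eval (y i) * (p (φ i : ℕ)).eval (y i) *
              (Real.sqrt (w (y i)) * Real.sqrt (w (y i))) := by ring
          _ = _ := by rw [hs]


noncomputable def MM (μ : Measure ℝ) (w : ℝ → ℝ) (p : ℕ → Polynomial ℝ) (g : ℝ → ℂ)
    (a b : ℕ) : ℂ :=
  ∫ x, g x * (((p a).eval x * (p b).eval x * w x : ℝ) : ℂ) ∂μ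

lemma integral_prod_det (μ : Measure ℝ) [SigmaFinite μ] (w : ℝ → ℝ) (hw : ∀ x, 0 ≤ w x)
    (hwmeas : Measurable w) (hmom : ∀ k : ℕ, Integrable (fun x => |x| ^ k * w x) μ)
    (p : ℕ → Polynomial ℝ) (N k : ℕ)
    (g : ℝ → ℂ) (hg : Measurable g) (Cg : ℝ) (hCg : ∀ x, ‖g x‖ ≤ Cg) :
    (∫ y : Fin k → ℝ, (∏ j, g (y j)) *
        ((Matrix.det fun i j : Fin k => cdKernel w p N (y i) (y j) : ℝ) : ℂ)
        ∂(Measure.pi fun _ => μ))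
      = ∑ φ : Fin k → Fin N, Matrix.det (fun i j : Fin k => MM μ w p g (φ i) (φ j)) := by
  have hint : ∀ a b : Fin N, Integrable
      (fun x : ℝ => g x * (((p (a : ℕ)).eval x * (p (b : ℕ)).eval x * w x : ℝ) : ℂ)) μ :=
    fun a b => integrable_MM hw hwmeas hmom p hg hCg a b
  have hprod : ∀ (τ : Equiv.Perm (Fin k)) (φ : Fin k → Fin N), Integrable
      (fun y : Fin k → ℝ => ∏ i, (g (y i) *
        (((p (φ (τ⁻¹ i) : ℕ)).eval (y i) * (p (φ i : ℕ)).eval (y i) * w (y i) : ℝ) : ℂ)))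
      (Measure.pi fun _ => μ) :=
    fun τ φ => integrable_pi_prod _ (fun i => hint _ _)
  have key : (fun y : Fin k → ℝ => (∏ j, g (y j)) *
      ((Matrix.det fun i j : Fin k => cdKernel w p N (y i) (y j) : ℝ) : ℂ))
      = fun y => ∑ τ : Equiv.Perm (Fin k), ∑ φ : Fin k → Fin N,
        (((Equiv.Perm.sign τ : ℤ) : ℂ)) * ∏ i, (g (y i) *
          (((p (φ (τ⁻¹ i) : ℕ)).eval (y i) * (p (φ i : ℕ)).eval (y i) * w (y i) : ℝ) : ℂ)) := by
    funext y
    rw [det_cdKernel_expand hw p N k y]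
    push_cast
    simp only [Finset.mul_sum]
    refine Finset.sum_congr rfl fun τ _ => Finset.sum_congr rfl fun φ _ => ?_
    simp only [Finset.prod_mul_distrib]
    ring
  rw [key, integral_finset_sum _ (fun τ _ =>
    integrable_finset_sum _ (fun φ _ => (hprod τ φ).const_mul _))]
  have step2 : ∀ τ : Equiv.Perm (Fin k),
      (∫ y : Fin k → ℝ, ∑ φ : Fin k → Fin N, (((Equiv.Perm.sign τ : ℤ) : ℂ)) *
        ∏ i, (g (y i) *
          (((p (φ (τ⁻¹ i) : ℕ)).eval (y i) * (p (φ i : ℕ)).eval (y i) * w (y i) : ℝ) : ℂ))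
        ∂(Measure.pi fun _ => μ))
      = ∑ φ : Fin k → Fin N, (((Equiv.Perm.sign τ : ℤ) : ℂ)) *
          ∏ i, MM μ w p g (φ (τ⁻¹ i) : ℕ) (φ i : ℕ) := by
    intro τ
    rw [integral_finset_sum _ (fun φ _ => (hprod τ φ).const_mul _)]
    refine Finset.sum_congr rfl fun φ _ => ?_
    rw [integral_const_mul]
    congr 1
    rw [integral_pi_prod (fun i x => g x *
      (((p (φ (τ⁻¹ i) : ℕ)).eval x * (p (φ i : ℕ)).eval x * w x : ℝ) : ℂ))]
    rfl
  simp only [step2]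
  rw [Finset.sum_comm]
  refine Finset.sum_congr rfl fun φ _ => ?_
  change _ = Matrix.det (Matrix.of fun i j : Fin k => MM μ w p g (φ i : ℕ) (φ j : ℕ))
  rw [Matrix.det_apply']
  refine Finset.sum_equiv (Equiv.inv (Equiv.Perm (Fin k))) (fun τ => by simp) (fun τ _ => ?_)
  simp [Equiv.Perm.sign_inv]


lemma det_cdKernel_eq_vandermonde {w : ℝ → ℝ} (hw : ∀ x, 0 ≤ w x) (p : ℕ → Polynomial ℝ)
    (hdeg : ∀ k, (p k).natDegree = k) (hlead : ∀ k, 0 < (p k).leadingCoeff)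
    (N : ℕ) (x : Fin N → ℝ) :
    Matrix.det (fun i j : Fin N => cdKernel w p N (x i) (x j)) =
      (∏ k ∈ Finset.range N, (p k).leadingCoeff) ^ 2 *
        ((∏ i : Fin N, ∏ j ∈ Finset.Ioi i, (x i - x j) ^ 2) * ∏ j, w (x j)) := by
  classical
  set Φ : Matrix (Fin N) (Fin N) ℝ :=
    fun i m => (p (m : ℕ)).eval (x i) * Real.sqrt (w (x i)) with hΦ
  have h1 : Matrix.det (fun i j : Fin N => cdKernel w p N (x i) (x j)) = Φ.det ^ 2 := by
    have h0 : (fun i j : Fin N => cdKernel w p N (x i) (x j)) = Φ * Φ.transpose := by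
      ext i j
      rw [Matrix.mul_apply]
      simp only [Matrix.transpose_apply]
      simpa [hΦ, Matrix.transpose_apply] using cdKernel_eq hw p N (x i) (x j)
    rw [h0, Matrix.det_mul, Matrix.det_transpose, sq]
  have h2 : Φ.det = (∏ i, Real.sqrt (w (x i))) *
      Matrix.det (Matrix.of fun i m : Fin N => (p (m : ℕ)).eval (x i)) := by
    have h0 : Φ = Matrix.of (fun i m : Fin N => Real.sqrt (w (x i)) *
        (Matrix.of fun i m : Fin N => (p (m : ℕ)).eval (x i)) i m) := by
      ext i m; simp [hΦ, mul_comm]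
    rw [h0, Matrix.det_mul_column]
  set c : Fin N → ℝ := fun m => (p (m : ℕ)).leadingCoeff with hc
  have hc0 : ∀ m, c m ≠ 0 := fun m => ne_of_gt (hlead m)
  set q : Fin N → Polynomial ℝ := fun m => Polynomial.C (c m)⁻¹ * p (m : ℕ) with hq
  have hqdeg : ∀ m : Fin N, (q m).natDegree = (m : ℕ) := fun m => by
    rw [hq]
    simp only
    rw [Polynomial.natDegree_C_mul (inv_ne_zero (hc0 m)), hdeg]
  have hqmonic : ∀ m, (q m).Monic := fun m => by
    unfold Polynomial.Monic
    rw [hq]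
    simp only
    rw [Polynomial.leadingCoeff_mul, Polynomial.leadingCoeff_C]
    exact inv_mul_cancel₀ (hc0 m)
  have hpq : ∀ (m : Fin N) (t : ℝ), (p (m : ℕ)).eval t = c m * (q m).eval t := by
    intro m t
    rw [hq]
    simp only [Polynomial.eval_mul, Polynomial.eval_C]
    rw [← mul_assoc, mul_inv_cancel₀ (hc0 m), one_mul]
  have h3 : Matrix.det (Matrix.of fun i m : Fin N => (p (m : ℕ)).eval (x i)) =
      (∏ m : Fin N, c m) * Matrix.det (Matrix.of fun i m : Fin N => (q m).eval (x i)) := by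
    have h0 : (Matrix.of fun i m : Fin N => (p (m : ℕ)).eval (x i)) =
        Matrix.of (fun i m : Fin N => c m *
          (Matrix.of fun i m : Fin N => (q m).eval (x i)) i m) := by
      ext i m; simp [hpq]
    rw [h0, Matrix.det_mul_row]
  have h4 : Matrix.det (Matrix.of fun i m : Fin N => (q m).eval (x i)) =
      ∏ i : Fin N, ∏ j ∈ Finset.Ioi i, (x j - x i) := by
    rw [← Matrix.det_eval_matrixOfPolynomials_eq_det_vandermonde x q hqdeg hqmonic,
      Matrix.det_vandermonde]
  have hsq : (∏ i : Fin N, Real.sqrt (w (x i))) ^ 2 = ∏ i, w (x i) := by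
    rw [← Finset.prod_pow]
    exact Finset.prod_congr rfl fun i _ => Real.sq_sqrt (hw (x i))
  have hvsq : (∏ i : Fin N, ∏ j ∈ Finset.Ioi i, (x j - x i)) ^ 2 =
      ∏ i : Fin N, ∏ j ∈ Finset.Ioi i, (x i - x j) ^ 2 := by
    rw [← Finset.prod_pow]
    refine Finset.prod_congr rfl fun i _ => ?_
    rw [← Finset.prod_pow]
    exact Finset.prod_congr rfl fun j _ => by ring
  have hcp : (∏ m : Fin N, c m) = ∏ k ∈ Finset.range N, (p k).leadingCoeff :=
    Fin.prod_univ_eq_prod_range (fun k => (p k).leadingCoeff) N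
  rw [h1, h2, h3, h4, ← hcp]
  calc ((∏ i, Real.sqrt (w (x i))) *
        ((∏ m : Fin N, c m) * ∏ i : Fin N, ∏ j ∈ Finset.Ioi i, (x j - x i))) ^ 2
      = (∏ m : Fin N, c m) ^ 2 * ((∏ i : Fin N, ∏ j ∈ Finset.Ioi i, (x j - x i)) ^ 2 *
          (∏ i, Real.sqrt (w (x i))) ^ 2) := by ring
    _ = _ := by rw [hsq, hvsq]


lemma det_piecewise_subset {n : ℕ} (F : Matrix (Fin n) (Fin n) ℂ) (S : Finset (Fin n)) :
    (Matrix.of fun a b : Fin n => if a ∈ S then F a b else (if a = b then (1:ℂ) else 0)).det =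
    (Matrix.of fun a b : {x : Fin n // x ∈ S} => F a b).det := by
  classical
  let e : {x : Fin n // x ∈ S} ⊕ {x : Fin n // ¬ x ∈ S} ≃ Fin n := Equiv.sumCompl (· ∈ S)
  rw [← Matrix.det_submatrix_equiv_self e
    (Matrix.of fun a b : Fin n => if a ∈ S then F a b else (if a = b then (1:ℂ) else 0))]
  have h0 : (Matrix.of fun a b : Fin n =>
        if a ∈ S then F a b else (if a = b then (1:ℂ) else 0)).submatrix e e
      = Matrix.fromBlocks (Matrix.of fun a b : {x : Fin n // x ∈ S} => F a b)
          (Matrix.of fun (a : {x : Fin n // x ∈ S}) (b : {x : Fin n // ¬ x ∈ S}) => F a b) 0 1 := by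
    ext i j
    cases i with
    | inl a =>
      cases j with
      | inl b => simp [e, Matrix.submatrix_apply, a.2]
      | inr b => simp [e, Matrix.submatrix_apply, a.2]
    | inr a =>
      cases j with
      | inl b =>
        have hne : (a : Fin n) ≠ (b : Fin n) := fun h => a.2 (h ▸ b.2)
        simp [e, Matrix.submatrix_apply, a.2, hne]
      | inr b =>
        by_cases hab : a = b
        · subst hab; simp [e, Matrix.submatrix_apply, a.2, Matrix.one_apply]
        · have hne : (a : Fin n) ≠ (b : Fin n) := fun h => hab (Subtype.ext h)
          simp [e, Matrix.submatrix_apply, a.2, hne, Matrix.one_apply, hab]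
  rw [h0, Matrix.det_fromBlocks_zero₂₁, Matrix.det_one, mul_one]

lemma det_one_add_sum_subsets {n : ℕ} (F : Matrix (Fin n) (Fin n) ℂ) :
    (Matrix.of fun a b : Fin n => (if a = b then (1:ℂ) else 0) + F a b).det =
    ∑ S : Finset (Fin n), (Matrix.of fun a b : {x : Fin n // x ∈ S} => F a b).det := by
  classical
  have h := (Matrix.detRowAlternating (n := Fin n) (R := ℂ)).toMultilinearMap.map_add_univ
      (fun a : Fin n => fun b => F a b) (fun a b : Fin n => if a = b then (1:ℂ) else 0)
  have hD : (Matrix.of fun a b : Fin n => (if a = b then (1:ℂ) else 0) + F a b)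
      = ((fun a : Fin n => fun b => F a b) + fun a b : Fin n => if a = b then (1:ℂ) else 0) := by
    funext a b
    exact add_comm _ _
  have hdet : (Matrix.of fun a b : Fin n => (if a = b then (1:ℂ) else 0) + F a b).det
      = (Matrix.detRowAlternating (n := Fin n) (R := ℂ)).toMultilinearMap
          ((fun a : Fin n => fun b => F a b) + fun a b : Fin n => if a = b then (1:ℂ) else 0) := by
    rw [← hD]; rfl
  rw [hdet, h]
  refine Finset.sum_congr rfl fun s _ => ?_
  have hpw : Finset.piecewise s (fun a : Fin n => fun b => F a b)
        (fun a b : Fin n => if a = b then (1:ℂ) else 0)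
      = Matrix.of (fun a b : Fin n => if a ∈ s then F a b else (if a = b then (1:ℂ) else 0)) := by
    funext a b
    by_cases h : a ∈ s <;> simp [Finset.piecewise, h]
  have : (Matrix.detRowAlternating (n := Fin n) (R := ℂ)).toMultilinearMap
        (Finset.piecewise s (fun a : Fin n => fun b => F a b)
          (fun a b : Fin n => if a = b then (1:ℂ) else 0))
      = (Matrix.of (fun a b : Fin n =>
          if a ∈ s then F a b else (if a = b then (1:ℂ) else 0))).det := by
    rw [hpw]; rfl
  rw [this, det_piecewise_subset]

lemma sum_phi_det {n k : ℕ} (F : Matrix (Fin n) (Fin n) ℂ) :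
    ∑ φ : Fin k → Fin n, (Matrix.of fun i j : Fin k => F (φ i) (φ j)).det =
    (Nat.factorial k : ℂ) * ∑ S ∈ Finset.powersetCard k (Finset.univ : Finset (Fin n)),
      (Matrix.of fun a b : {x : Fin n // x ∈ S} => F a b).det := by
  classical
  have hsplit := Finset.sum_filter_add_sum_filter_not Finset.univ
      (fun φ : Fin k → Fin n => Function.Injective φ)
      (fun φ => (Matrix.of fun i j : Fin k => F (φ i) (φ j)).det)
  have hnon : ∑ φ ∈ Finset.univ.filter (fun φ : Fin k → Fin n => ¬ Function.Injective φ),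
      (Matrix.of fun i j : Fin k => F (φ i) (φ j)).det = 0 := by
    refine Finset.sum_eq_zero fun φ hφ => ?_
    rw [Finset.mem_filter] at hφ
    obtain ⟨i, j, hij, hne⟩ := Function.not_injective_iff.mp hφ.2
    exact Matrix.det_zero_of_row_eq hne (funext fun b => by simp [hij])
  have hmaps : ∀ φ ∈ Finset.univ.filter (fun φ : Fin k → Fin n => Function.Injective φ),
      Finset.image φ Finset.univ ∈ Finset.powersetCard k (Finset.univ : Finset (Fin n)) := by
    intro φ hφ
    rw [Finset.mem_filter] at hφ
    rw [Finset.mem_powersetCard]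
    exact ⟨Finset.subset_univ _, by
      rw [Finset.card_image_of_injective _ hφ.2, Finset.card_univ, Fintype.card_fin]⟩
  have hfib := Finset.sum_fiberwise_of_maps_to hmaps
      (fun φ => (Matrix.of fun i j : Fin k => F (φ i) (φ j)).det)
  have hdetS : ∀ S ∈ Finset.powersetCard k (Finset.univ : Finset (Fin n)),
      ∀ φ ∈ (Finset.univ.filter (fun φ : Fin k → Fin n => Function.Injective φ)).filter
          (fun φ => Finset.image φ Finset.univ = S),
      (Matrix.of fun i j : Fin k => F (φ i) (φ j)).det =
      (Matrix.of fun a b : {x : Fin n // x ∈ S} => F a b).det := by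
    intro S hS φ hφ
    simp only [Finset.mem_filter, Finset.mem_univ, true_and] at hφ
    obtain ⟨hinj, himg⟩ := hφ
    have hmem : ∀ i, φ i ∈ S := fun i => by
      rw [← himg]; exact Finset.mem_image_of_mem φ (Finset.mem_univ i)
    have hcard : Fintype.card {x : Fin n // x ∈ S} = k := by
      rw [Fintype.card_coe]
      exact (Finset.mem_powersetCard.mp hS).2
    let e : Fin k ≃ {x : Fin n // x ∈ S} :=
      Equiv.ofBijective (fun i => ⟨φ i, hmem i⟩)
        ((Fintype.bijective_iff_injective_and_card _).mpr
          ⟨fun i j h => hinj (congrArg Subtype.val h), by rw [hcard, Fintype.card_fin]⟩)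
    have hsub : (Matrix.of fun a b : {x : Fin n // x ∈ S} => F a b).submatrix e e =
        Matrix.of (fun i j : Fin k => F (φ i) (φ j)) := by
      ext i j
      simp [e, Matrix.submatrix_apply, Equiv.ofBijective]
    rw [← hsub, Matrix.det_submatrix_equiv_self]
  have hcardfib : ∀ S ∈ Finset.powersetCard k (Finset.univ : Finset (Fin n)),
      ((Finset.univ.filter (fun φ : Fin k → Fin n => Function.Injective φ)).filter
        (fun φ => Finset.image φ Finset.univ = S)).card = Nat.factorial k := by
    intro S hS
    have hSc : S.card = k := (Finset.mem_powersetCard.mp hS).2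
    have hψinj : Function.Injective (fun z : Fin k => ((S.orderIsoOfFin hSc z : Fin n))) :=
      fun i j h => (S.orderIsoOfFin hSc).injective (Subtype.ext h)
    have him : (Finset.univ.filter (fun φ : Fin k → Fin n => Function.Injective φ)).filter
          (fun φ => Finset.image φ Finset.univ = S)
        = Finset.image
            (fun σ : Equiv.Perm (Fin k) => fun i => ((S.orderIsoOfFin hSc (σ i) : Fin n)))
            Finset.univ := by
      ext φ
      simp only [Finset.mem_filter, Finset.mem_univ, true_and, Finset.mem_image]
      constructor
      · rintro ⟨hinj, himg⟩
        have hmem : ∀ i, φ i ∈ S := fun i => by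
          rw [← himg]; exact Finset.mem_image_of_mem φ (Finset.mem_univ i)
        have hbij : Function.Bijective
            (fun i : Fin k => (S.orderIsoOfFin hSc).symm ⟨φ i, hmem i⟩) := by
          rw [Fintype.bijective_iff_injective_and_card]
          refine ⟨fun i j h => hinj ?_, rfl⟩
          have h2 := congrArg (fun z => (((S.orderIsoOfFin hSc) z : Fin n))) h
          simpa using h2
        refine ⟨Equiv.ofBijective _ hbij, ?_⟩
        funext i
        simp [Equiv.ofBijective]
      · rintro ⟨σ, rfl⟩
        have hinj : Function.Injective
            (fun i => ((S.orderIsoOfFin hSc (σ i) : Fin n))) :=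
          fun i j h => σ.injective ((S.orderIsoOfFin hSc).injective (Subtype.ext h))
        refine ⟨hinj, ?_⟩
        apply Finset.eq_of_subset_of_card_le
        · intro a ha
          obtain ⟨i, _, rfl⟩ := Finset.mem_image.mp ha
          exact (S.orderIsoOfFin hSc (σ i)).2
        · rw [Finset.card_image_of_injective _ hinj, Finset.card_univ, Fintype.card_fin, hSc]
    rw [him]
    have hpinj : Function.Injective
        (fun σ : Equiv.Perm (Fin k) => fun i => ((S.orderIsoOfFin hSc (σ i) : Fin n))) := by
      intro σ σ' h
      apply Equiv.ext
      intro i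
      exact (S.orderIsoOfFin hSc).injective (Subtype.ext (congrFun h i))
    rw [Finset.card_image_of_injective _ hpinj, Finset.card_univ, Fintype.card_perm,
      Fintype.card_fin]
  calc ∑ φ : Fin k → Fin n, (Matrix.of fun i j : Fin k => F (φ i) (φ j)).det
      = (∑ φ ∈ Finset.univ.filter (fun φ : Fin k → Fin n => Function.Injective φ),
          (Matrix.of fun i j : Fin k => F (φ i) (φ j)).det) +
        ∑ φ ∈ Finset.univ.filter (fun φ : Fin k → Fin n => ¬ Function.Injective φ),
          (Matrix.of fun i j : Fin k => F (φ i) (φ j)).det := hsplit.symm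
    _ = ∑ φ ∈ Finset.univ.filter (fun φ : Fin k → Fin n => Function.Injective φ),
          (Matrix.of fun i j : Fin k => F (φ i) (φ j)).det := by rw [hnon, add_zero]
    _ = ∑ S ∈ Finset.powersetCard k (Finset.univ : Finset (Fin n)),
          ∑ φ ∈ (Finset.univ.filter (fun φ : Fin k → Fin n => Function.Injective φ)).filter
            (fun φ => Finset.image φ Finset.univ = S),
          (Matrix.of fun i j : Fin k => F (φ i) (φ j)).det := hfib.symm
    _ = ∑ S ∈ Finset.powersetCard k (Finset.univ : Finset (Fin n)),
          (Nat.factorial k : ℂ) *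
            (Matrix.of fun a b : {x : Fin n // x ∈ S} => F a b).det := by
        refine Finset.sum_congr rfl fun S hS => ?_
        rw [Finset.sum_congr rfl (hdetS S hS), Finset.sum_const, hcardfib S hS,
          nsmul_eq_mul]
    _ = _ := by rw [Finset.mul_sum]

lemma sum_phi_det_full {n : ℕ} (M : Matrix (Fin n) (Fin n) ℂ) :
    ∑ φ : Fin n → Fin n, (Matrix.of fun i j : Fin n => M (φ i) (φ j)).det =
      (Nat.factorial n : ℂ) * M.det := by
  classical
  rw [sum_phi_det M]
  congr 1
  have hps := Finset.powersetCard_self (Finset.univ : Finset (Fin n))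
  rw [Finset.card_univ, Fintype.card_fin] at hps
  rw [hps, Finset.sum_singleton]
  let e : {x : Fin n // x ∈ (Finset.univ : Finset (Fin n))} ≃ Fin n :=
    Equiv.subtypeUnivEquiv (fun x => Finset.mem_univ x)
  have h0 : (Matrix.of fun a b : {x : Fin n // x ∈ (Finset.univ : Finset (Fin n))} => M a b)
      = M.submatrix e e := by
    ext a b
    simp [e, Matrix.submatrix_apply, Equiv.subtypeUnivEquiv]
  rw [h0, Matrix.det_submatrix_equiv_self]

lemma det_one_add_expansion {n : ℕ} (F : Matrix (Fin n) (Fin n) ℂ) :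
    (∑ k ∈ Finset.range (n + 1), (1 / (Nat.factorial k : ℂ)) *
        ∑ φ : Fin k → Fin n, (Matrix.of fun i j : Fin k => F (φ i) (φ j)).det)
      = (Matrix.of fun a b : Fin n => (if a = b then (1:ℂ) else 0) + F a b).det := by
  classical
  rw [det_one_add_sum_subsets, ← Finset.powerset_univ, Finset.powerset_card_disjiUnion]
  erw [Finset.sum_disjiUnion]
  rw [show (Finset.univ : Finset (Fin n)).card = n from by
    rw [Finset.card_univ, Fintype.card_fin]]
  refine Finset.sum_congr rfl fun k _ => ?_
  rw [sum_phi_det, ← mul_assoc, one_div, inv_mul_cancel₀, one_mul]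
  exact_mod_cast Nat.factorial_ne_zero k

lemma MM_one {μ : Measure ℝ} {w : ℝ → ℝ} {p : ℕ → Polynomial ℝ}
    (horth : ∀ j k, (∫ x, (p j).eval x * (p k).eval x * w x ∂μ) =
      if j = k then (1 : ℝ) else 0) (a b : ℕ) :
    MM μ w p (fun _ => (1:ℂ)) a b = if a = b then (1:ℂ) else 0 := by
  unfold MM
  simp only [one_mul]
  have h2 : (∫ x, (((p a).eval x * (p b).eval x * w x : ℝ) : ℂ) ∂μ)
      = ((∫ x, (p a).eval x * (p b).eval x * w x ∂μ : ℝ) : ℂ) := integral_ofReal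
  rw [h2, horth a b]
  split_ifs <;> simp

lemma MM_one_add {μ : Measure ℝ} {w : ℝ → ℝ} (hw : ∀ x, 0 ≤ w x) (hwmeas : Measurable w)
    (hmom : ∀ k : ℕ, Integrable (fun x => |x| ^ k * w x) μ) {p : ℕ → Polynomial ℝ}
    (horth : ∀ j k, (∫ x, (p j).eval x * (p k).eval x * w x ∂μ) =
      if j = k then (1 : ℝ) else 0)
    {f : ℝ → ℂ} (hf : Measurable f) {C : ℝ} (hfC : ∀ x, ‖f x‖ ≤ C) (a b : ℕ) :
    MM μ w p (fun x => 1 + f x) a b = (if a = b then (1:ℂ) else 0) + MM μ w p f a b := by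
  unfold MM
  have h1 : (fun x => (1 + f x) * (((p a).eval x * (p b).eval x * w x : ℝ) : ℂ))
      = fun x => (1:ℂ) * (((p a).eval x * (p b).eval x * w x : ℝ) : ℂ) +
          f x * (((p a).eval x * (p b).eval x * w x : ℝ) : ℂ) := by
    funext x; ring
  rw [h1, integral_add
    (integrable_MM hw hwmeas hmom p measurable_const (fun x => by simp : ∀ x : ℝ, ‖(1:ℂ)‖ ≤ 1) a b)
    (integrable_MM hw hwmeas hmom p hf hfC a b)]
  congr 1
  simp only [one_mul]
  have h2 : (∫ x, (((p a).eval x * (p b).eval x * w x : ℝ) : ℂ) ∂μ)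
      = ((∫ x, (p a).eval x * (p b).eval x * w x ∂μ : ℝ) : ℂ) := integral_ofReal
  rw [h2, horth a b]
  split_ifs <;> simp
end OPEAux

/-- Expectation of multiplicative statistics as a (finite) Fredholm expansion:
`E[∏_{j=1}^N (1 + f(x_j))]
  = ∑_{k=0}^N (1/k!) ∫_{Ω^k} ∏_j f(x_j) det(K_N(x_i,x_j))_{i,j≤k} dμ^k`. -/
theorem ope_multiplicative_statistics
    (μ : Measure ℝ) [SigmaFinite μ] (w : ℝ → ℝ) (hw : ∀ x, 0 ≤ w x)
    (hwmeas : Measurable w)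
    (hmom : ∀ k : ℕ, Integrable (fun x => |x| ^ k * w x) μ)
    (p : ℕ → Polynomial ℝ)
    (hdeg : ∀ k, (p k).natDegree = k) (hlead : ∀ k, 0 < (p k).leadingCoeff)
    (horth : ∀ j k, (∫ x, (p j).eval x * (p k).eval x * w x ∂μ) =
      if j = k then (1 : ℝ) else 0)
    (N : ℕ) (Z : ℝ) (hZ0 : Z ≠ 0)
    (hZ : Z = ∫ x : Fin N → ℝ,
      (∏ i : Fin N, ∏ j ∈ Finset.Ioi i, (x i - x j) ^ 2) * ∏ j, w (x j)
      ∂Measure.pi fun _ => μ)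
    (f : ℝ → ℂ) (hf : Measurable f) (C : ℝ) (hfC : ∀ x, ‖f x‖ ≤ C) :
    (∫ x : Fin N → ℝ,
        (∏ j, (1 + f (x j))) * (opeDensity w Z N x : ℂ)
        ∂Measure.pi fun _ => μ) =
      ∑ k ∈ Finset.range (N + 1),
        (1 / (Nat.factorial k : ℂ)) *
          ∫ y : Fin k → ℝ,
            (∏ j, f (y j)) *
              ((Matrix.det fun i j : Fin k => cdKernel w p N (y i) (y j) : ℝ) : ℂ)
            ∂Measure.pi fun _ => μ := by
  classical
  set P : ℝ := ∏ k ∈ Finset.range N, (p k).leadingCoeff with hP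
  have hP0 : P ≠ 0 := by
    rw [hP]
    exact Finset.prod_ne_zero_iff.mpr fun k _ => ne_of_gt (hlead k)
  set FF : Matrix (Fin N) (Fin N) ℂ :=
    Matrix.of (fun a b : Fin N => OPEAux.MM μ w p f (a : ℕ) (b : ℕ)) with hFF
  set D : Matrix (Fin N) (Fin N) ℂ :=
    Matrix.of (fun a b : Fin N => (if a = b then (1:ℂ) else 0) + FF a b) with hD
  have hg : Measurable (fun x : ℝ => 1 + f x) := measurable_const.add hf
  have hgC : ∀ x : ℝ, ‖(1 : ℂ) + f x‖ ≤ 1 + C := fun x =>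
    le_trans (norm_add_le _ _) (by rw [norm_one]; exact add_le_add_right (hfC x) 1)
  have hL4g := OPEAux.integral_prod_det μ w hw hwmeas hmom p N N
    (fun x => 1 + f x) hg (1 + C) hgC
  beta_reduce at hL4g
  have hL41 := OPEAux.integral_prod_det μ w hw hwmeas hmom p N N
    (fun _ => (1:ℂ)) measurable_const 1 (fun x => by simp)
  beta_reduce at hL41
  have hL4f : ∀ k : ℕ,
      (∫ y : Fin k → ℝ, (∏ j, f (y j)) *
        ((Matrix.det fun i j : Fin k => cdKernel w p N (y i) (y j) : ℝ) : ℂ)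
        ∂(Measure.pi fun _ => μ))
      = ∑ φ : Fin k → Fin N,
          Matrix.det (fun i j : Fin k => OPEAux.MM μ w p f (φ i : ℕ) (φ j : ℕ)) :=
    fun k => OPEAux.integral_prod_det μ w hw hwmeas hmom p N k f hf C hfC
  -- value of Z
  have hZval : (Z : ℂ) = ((P:ℂ)^2)⁻¹ * (Nat.factorial N : ℂ) := by
    have h0 : (Z : ℂ) = ∫ x : Fin N → ℝ,
        ((((∏ i : Fin N, ∏ j ∈ Finset.Ioi i, (x i - x j)^2) * ∏ j, w (x j) : ℝ)) : ℂ)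
        ∂(Measure.pi fun _ => μ) := by
      rw [hZ]; exact integral_ofReal.symm
    have hpt : (fun x : Fin N → ℝ =>
        ((((∏ i : Fin N, ∏ j ∈ Finset.Ioi i, (x i - x j)^2) * ∏ j, w (x j) : ℝ)) : ℂ))
        = fun x => ((P:ℂ)^2)⁻¹ * ((∏ _j : Fin N, (1:ℂ)) *
            ((Matrix.det fun i j : Fin N => cdKernel w p N (x i) (x j) : ℝ) : ℂ)) := by
      funext x
      have h := OPEAux.det_cdKernel_eq_vandermonde hw p hdeg hlead N x
      rw [← hP] at h
      have h2 : ((P^2)⁻¹ * Matrix.det (fun i j : Fin N => cdKernel w p N (x i) (x j)) : ℝ)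
          = (∏ i : Fin N, ∏ j ∈ Finset.Ioi i, (x i - x j)^2) * ∏ j, w (x j) := by
        rw [h, ← mul_assoc, inv_mul_cancel₀ (pow_ne_zero 2 hP0), one_mul]
      rw [← h2]
      push_cast
      simp only [Finset.prod_const_one]
      ring
    rw [h0, hpt, integral_const_mul, hL41]
    have hone : ∀ φ : Fin N → Fin N,
        (Matrix.det fun i j : Fin N => OPEAux.MM μ w p (fun _ => (1:ℂ)) (φ i : ℕ) (φ j : ℕ))
        = (Matrix.of fun i j : Fin N =>
            (1 : Matrix (Fin N) (Fin N) ℂ) (φ i) (φ j)).det := by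
      intro φ
      congr 1
      funext i j
      rw [OPEAux.MM_one horth]
      simp [Matrix.one_apply, Fin.val_inj]
    rw [Finset.sum_congr rfl fun φ _ => hone φ, OPEAux.sum_phi_det_full, Matrix.det_one, mul_one]
  -- RHS equals det D
  have hsum : ∑ φ : Fin N → Fin N,
      (Matrix.det fun i j : Fin N => OPEAux.MM μ w p (fun x => 1 + f x) (φ i : ℕ) (φ j : ℕ))
      = (Nat.factorial N : ℂ) * D.det := by
    have h1 : ∀ φ : Fin N → Fin N,
        (Matrix.det fun i j : Fin N => OPEAux.MM μ w p (fun x => 1 + f x) (φ i : ℕ) (φ j : ℕ))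
        = (Matrix.of fun i j : Fin N => D (φ i) (φ j)).det := by
      intro φ
      congr 1
      funext i j
      rw [OPEAux.MM_one_add hw hwmeas hmom horth hf hfC]
      simp only [hD, hFF, Matrix.of_apply]
      congr 1
      simp [Fin.val_inj]
    rw [Finset.sum_congr rfl fun φ _ => h1 φ, OPEAux.sum_phi_det_full]
  have hRHS : (∑ k ∈ Finset.range (N + 1),
        (1 / (Nat.factorial k : ℂ)) *
          ∫ y : Fin k → ℝ,
            (∏ j, f (y j)) *
              ((Matrix.det fun i j : Fin k => cdKernel w p N (y i) (y j) : ℝ) : ℂ)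
            ∂Measure.pi fun _ => μ) = D.det := by
    have := OPEAux.det_one_add_expansion FF
    rw [hD]
    rw [← this]
    refine Finset.sum_congr rfl fun k _ => ?_
    congr 1
    rw [hL4f k]
    refine Finset.sum_congr rfl fun φ _ => ?_
    rfl
  rw [hRHS]
  -- LHS
  have hpt2 : (fun x : Fin N → ℝ => (∏ j, (1 + f (x j))) * (opeDensity w Z N x : ℂ))
      = fun x => ((Z:ℂ)⁻¹ * ((P:ℂ)^2)⁻¹) * ((∏ j, (1 + f (x j))) *
          ((Matrix.det fun i j : Fin N => cdKernel w p N (x i) (x j) : ℝ) : ℂ)) := by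
    funext x
    have h := OPEAux.det_cdKernel_eq_vandermonde hw p hdeg hlead N x
    rw [← hP] at h
    have h2 : ((P^2)⁻¹ * Matrix.det (fun i j : Fin N => cdKernel w p N (x i) (x j)) : ℝ)
        = (∏ i : Fin N, ∏ j ∈ Finset.Ioi i, (x i - x j)^2) * ∏ j, w (x j) := by
      rw [h, ← mul_assoc, inv_mul_cancel₀ (pow_ne_zero 2 hP0), one_mul]
    unfold opeDensity
    rw [mul_assoc Z⁻¹, ← h2]
    push_cast
    ring
  rw [hpt2, integral_const_mul, hL4g, hsum, hZval]
  have hfac : ((Nat.factorial N : ℂ)) ≠ 0 := by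
    exact_mod_cast Nat.factorial_ne_zero N
  have hPc : ((P:ℂ))^2 ≠ 0 := pow_ne_zero 2 (by exact_mod_cast hP0)
  have hPc1 : ((P:ℂ)) ≠ 0 := by exact_mod_cast hP0
  field_simp
end
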